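/- arXiv:2011.05886 — 3 statements merged into one kernel-verified Lean document; each statement's English description precedes it below -/
import Mathlib

section
/- For λ = (m, m-1, ..., 1, 0, ..., 0) regarded as a partition with N parts, F_0 = {1,...,m,N} and F_1 = {1,...,m}: D τ_{F_1} = t^{-(m+1)(N-m-1)} [N-m]_t · τ_{F_0}, where τ_{F_1} = M φ_{F_1} = (θ_{m+1} + ... + θ_N) θ_1 θ_2 ⋯ θ_m and τ_{F_0} = D φ_{F_1'} is the corresponding eigenvector; in particular ‖D τ_{F_1}‖² = t^{N-m-1} [N]_t ‖τ_{F_1}‖² with respect to the form ⟨φ_E, φ_F⟩ = δ_{E,F} t^{-inv(E)}. -/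
open Finset

noncomputable section

/-- The space of "fermionic" polynomials: formal linear combinations of
monomials `φ_E = θ_{i₁}⋯θ_{i_m}` indexed by finite sets `E` of indices. -/
abbrev SP (K : Type) [Field K] := Finset ℕ →₀ K

variable {K : Type} [Field K]

/-- basis monomial φ_E -/
def phi (K : Type) [Field K] (E : Finset ℕ) : SP K := Finsupp.single E 1

/-- linear operator determined by its values on the basis {φ_E} -/
def opOf (v : Finset ℕ → SP K) : SP K →ₗ[K] SP K :=
  Finsupp.lsum K fun E => LinearMap.toSpanSingleton K (SP K) (v E)

/-- the image s_i E of E under the transposition swapping i, i+1 -/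
def swapSet (i : ℕ) (E : Finset ℕ) : Finset ℕ := E.image (Equiv.swap i (i + 1))

/-- the Hecke algebra operator T_i acting on anti-commuting variables -/
def heckeT (t : K) (i : ℕ) : SP K →ₗ[K] SP K :=
  opOf fun E =>
    if i ∈ E then
      (if i + 1 ∈ E then -phi K E else phi K (swapSet i E))
    else
      (if i + 1 ∈ E then (t - 1) • phi K E + t • phi K (swapSet i E)
       else t • phi K E)

/-- inv(E) = #{(i,j) ∈ E × E^C : i < j}, complement taken inside {1,…,N} -/
def invE (N : ℕ) (E : Finset ℕ) : ℕ :=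
  ((E ×ˢ (Finset.Icc 1 N \ E)).filter fun p => p.1 < p.2).card

/-- the symmetric bilinear form ⟨φ_E, φ_F⟩ = δ_{E,F} t^{-inv(E)} -/
def sform (t : K) (N : ℕ) (f g : SP K) : K :=
  f.sum fun E c => c * g E * t⁻¹ ^ invE N E

/-- signed exterior multiplication θ̂_i -/
def thetaHat (K : Type) [Field K] (i : ℕ) : SP K →ₗ[K] SP K :=
  opOf fun E =>
    if i ∈ E then 0
    else ((-1 : K) ^ (E.filter (· < i)).card) • phi K (insert i E)

/-- formal fermionic derivative ∂_i -/
def fermD (K : Type) [Field K] (i : ℕ) : SP K →ₗ[K] SP K :=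
  opOf fun E =>
    if i ∈ E then ((-1 : K) ^ (E.filter (· < i)).card) • phi K (E.erase i)
    else 0

/-- M = Σ_{i=1}^N θ̂_i -/
def opM (K : Type) [Field K] (N : ℕ) : SP K →ₗ[K] SP K :=
  ∑ i ∈ Finset.Icc 1 N, thetaHat K i

/-- D = Σ_{i=1}^N t^{i-1} ∂_i -/
def opD (t : K) (N : ℕ) : SP K →ₗ[K] SP K :=
  ∑ i ∈ Finset.Icc 1 N, t ^ (i - 1) • fermD K i

/-- auxiliary recursion for the Jucys–Murphy operators (first arg = fuel) -/
def omegaAux (t : K) : ℕ → ℕ → SP K →ₗ[K] SP K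
  | 0, _ => LinearMap.id
  | k + 1, i => t⁻¹ • (heckeT t i ∘ₗ omegaAux t k (i + 1) ∘ₗ heckeT t i)

/-- Jucys–Murphy operator ω_i = t^{i-N} T_i ⋯ T_{N-1} T_{N-1} ⋯ T_i  (ω_N = 1),
via the recursion ω_N = 1, ω_i = t⁻¹ T_i ω_{i+1} T_i. -/
def omega (t : K) (N i : ℕ) : SP K →ₗ[K] SP K := omegaAux t (N - i) i

/-! ### basic lemmas -/

theorem opOf_phi (v : Finset ℕ → SP K) (E : Finset ℕ) : opOf v (phi K E) = v E := by
  simp [opOf, phi, Finsupp.lsum_single, LinearMap.toSpanSingleton_apply]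

theorem SP_lhom_ext {f g : SP K →ₗ[K] SP K} (h : ∀ E, f (phi K E) = g (phi K E)) : f = g := by
  refine Finsupp.lhom_ext fun E c => ?_
  have hE : (Finsupp.single E c : SP K) = c • phi K E := by
    simp [phi, Finsupp.smul_single]
  rw [hE, map_smul, map_smul, h]

theorem mem_swapSet {i a : ℕ} {E : Finset ℕ} :
    a ∈ swapSet i E ↔ Equiv.swap i (i + 1) a ∈ E := by
  constructor
  · intro h
    rcases Finset.mem_image.1 h with ⟨b, hb, rfl⟩
    simpa using hb
  · intro h
    exact Finset.mem_image.2 ⟨_, h, by simp⟩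

theorem mem_swapSet_of_ne {i j : ℕ} {E : Finset ℕ} (h1 : j ≠ i) (h2 : j ≠ i + 1) :
    j ∈ swapSet i E ↔ j ∈ E := by
  rw [mem_swapSet, Equiv.swap_apply_of_ne_of_ne h1 h2]

theorem swapSet_of_mem {i : ℕ} {E : Finset ℕ} (h1 : i ∈ E) (h2 : i + 1 ∉ E) :
    swapSet i E = insert (i + 1) (E.erase i) := by
  ext a
  rw [mem_swapSet, Equiv.swap_apply_def]
  split_ifs with h h'
  · subst h; simp [h2, Finset.mem_erase]
  · subst h'; simp [h1]
  · simp only [Finset.mem_insert, Finset.mem_erase]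
    constructor
    · intro ha; exact Or.inr ⟨h, ha⟩
    · rintro (rfl | ⟨_, ha⟩); · exact absurd rfl h'
      · exact ha

theorem swapSet_of_mem' {i : ℕ} {E : Finset ℕ} (h1 : i + 1 ∈ E) (h2 : i ∉ E) :
    swapSet i E = insert i (E.erase (i + 1)) := by
  ext a
  rw [mem_swapSet, Equiv.swap_apply_def]
  split_ifs with h h'
  · subst h; simp [h1]
  · subst h'; simp [h2, Finset.mem_erase]
  · simp only [Finset.mem_insert, Finset.mem_erase]
    constructor
    · intro ha; exact Or.inr ⟨h', ha⟩
    · rintro (rfl | ⟨_, ha⟩); · exact absurd rfl h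
      · exact ha

theorem swapSet_insert_of_ne {i j : ℕ} (E : Finset ℕ) (h1 : j ≠ i) (h2 : j ≠ i + 1) :
    swapSet i (insert j E) = insert j (swapSet i E) := by
  simp [swapSet, Finset.image_insert, Equiv.swap_apply_of_ne_of_ne h1 h2]

/-! ### filter-card lemmas -/

theorem filter_card_insert {j : ℕ} (i : ℕ) {E : Finset ℕ} (hj : j ∉ E) :
    ((insert j E).filter (· < i)).card
      = (E.filter (· < i)).card + if j < i then 1 else 0 := by
  rw [Finset.filter_insert]
  split_ifs with h
  · rw [Finset.card_insert_of_notMem (fun hc => hj (Finset.mem_of_mem_filter _ hc))]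
  · simp

theorem filter_card_erase {j : ℕ} (i : ℕ) {E : Finset ℕ} (hj : j ∈ E) :
    (E.filter (· < i)).card = ((E.erase j).filter (· < i)).card + if j < i then 1 else 0 := by
  conv_lhs => rw [← Finset.insert_erase hj]
  exact filter_card_insert i (Finset.notMem_erase _ _)

theorem filter_card_succ_of_mem {i : ℕ} {E : Finset ℕ} (hi : i ∈ E) :
    (E.filter (· < i + 1)).card = (E.filter (· < i)).card + 1 := by
  have : E.filter (· < i + 1) = insert i (E.filter (· < i)) := by
    ext x
    simp only [Finset.mem_filter, Finset.mem_insert]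
    constructor
    · rintro ⟨hx, hlt⟩
      rcases Nat.lt_succ_iff_lt_or_eq.1 hlt with h | h
      · exact Or.inr ⟨hx, h⟩
      · exact Or.inl h
    · rintro (rfl | ⟨hx, h⟩)
      · exact ⟨hi, Nat.lt_succ_self _⟩
      · exact ⟨hx, h.trans (Nat.lt_succ_self _)⟩
  rw [this, Finset.card_insert_of_notMem (by simp)]

theorem filter_card_succ_of_notMem {i : ℕ} {E : Finset ℕ} (hi : i ∉ E) :
    (E.filter (· < i + 1)).card = (E.filter (· < i)).card := by
  congr 1
  apply Finset.filter_congr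
  intro x hx
  have hxi : x ≠ i := ne_of_mem_of_not_mem hx hi
  omega

theorem filter_card_swapSet {i j : ℕ} (E : Finset ℕ) (h : j ≠ i + 1) :
    ((swapSet i E).filter (· < j)).card = (E.filter (· < j)).card := by
  rw [swapSet, Finset.filter_image,
    Finset.card_image_of_injective _ (Equiv.injective _)]
  congr 1
  apply Finset.filter_congr
  intro x _
  rcases eq_or_ne x i with rfl | hxi
  · rw [Equiv.swap_apply_left]; omega
  rcases eq_or_ne x (i + 1) with rfl | hxi1
  · rw [Equiv.swap_apply_right]; omega
  · rw [Equiv.swap_apply_of_ne_of_ne hxi hxi1]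

/-! ### appliers -/

theorem heckeT_phi_mm {t : K} {i : ℕ} {E : Finset ℕ} (h1 : i ∈ E) (h2 : i + 1 ∈ E) :
    heckeT t i (phi K E) = -phi K E := by
  rw [heckeT, opOf_phi, if_pos h1, if_pos h2]

theorem heckeT_phi_mn {t : K} {i : ℕ} {E : Finset ℕ} (h1 : i ∈ E) (h2 : i + 1 ∉ E) :
    heckeT t i (phi K E) = phi K (swapSet i E) := by
  rw [heckeT, opOf_phi, if_pos h1, if_neg h2]

theorem heckeT_phi_nm {t : K} {i : ℕ} {E : Finset ℕ} (h1 : i ∉ E) (h2 : i + 1 ∈ E) :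
    heckeT t i (phi K E) = (t - 1) • phi K E + t • phi K (swapSet i E) := by
  rw [heckeT, opOf_phi, if_neg h1, if_pos h2]

theorem heckeT_phi_nn {t : K} {i : ℕ} {E : Finset ℕ} (h1 : i ∉ E) (h2 : i + 1 ∉ E) :
    heckeT t i (phi K E) = t • phi K E := by
  rw [heckeT, opOf_phi, if_neg h1, if_neg h2]

theorem thetaHat_phi_mem {i : ℕ} {E : Finset ℕ} (h : i ∈ E) :
    thetaHat K i (phi K E) = 0 := by
  rw [thetaHat, opOf_phi, if_pos h]

theorem thetaHat_phi_notMem {i : ℕ} {E : Finset ℕ} (h : i ∉ E) :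
    thetaHat K i (phi K E) = ((-1 : K) ^ (E.filter (· < i)).card) • phi K (insert i E) := by
  rw [thetaHat, opOf_phi, if_neg h]

theorem fermD_phi_mem {i : ℕ} {E : Finset ℕ} (h : i ∈ E) :
    fermD K i (phi K E) = ((-1 : K) ^ (E.filter (· < i)).card) • phi K (E.erase i) := by
  rw [fermD, opOf_phi, if_pos h]

theorem fermD_phi_notMem {i : ℕ} {E : Finset ℕ} (h : i ∉ E) :
    fermD K i (phi K E) = 0 := by
  rw [fermD, opOf_phi, if_neg h]


/-! ### Part 2: commutation and nilpotency -/
section Part2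
variable {K : Type} [Field K]

theorem mem_insert_iff_of_ne {a b : ℕ} {E : Finset ℕ} (h : a ≠ b) :
    a ∈ insert b E ↔ a ∈ E :=
  ⟨fun hh => (Finset.mem_insert.1 hh).resolve_left h, Finset.mem_insert_of_mem⟩

theorem opM_apply {N : ℕ} (x : SP K) : opM K N x = ∑ j ∈ Finset.Icc 1 N, thetaHat K j x := by
  rw [opM, LinearMap.sum_apply]

theorem opD_apply {t : K} {N : ℕ} (x : SP K) :
    opD t N x = ∑ j ∈ Finset.Icc 1 N, t ^ (j - 1) • fermD K j x := by
  rw [opD, LinearMap.sum_apply]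
  simp [LinearMap.smul_apply]

theorem omegaAux_succ_apply (t : K) (d i : ℕ) (x : SP K) :
    omegaAux t (d + 1) i x = t⁻¹ • heckeT t i (omegaAux t d (i + 1) (heckeT t i x)) := by
  rw [omegaAux]; rfl

/-! #### far commutations -/

theorem T_theta_far (t : K) {i j : ℕ} (hj1 : j ≠ i) (hj2 : j ≠ i + 1) (E : Finset ℕ) :
    heckeT t i (thetaHat K j (phi K E)) = thetaHat K j (heckeT t i (phi K E)) := by
  by_cases hj : j ∈ E
  · rw [thetaHat_phi_mem hj, map_zero]
    by_cases hi : i ∈ E <;> by_cases hi1 : i + 1 ∈ E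
    · rw [heckeT_phi_mm hi hi1, map_neg, thetaHat_phi_mem hj, neg_zero]
    · rw [heckeT_phi_mn hi hi1, thetaHat_phi_mem ((mem_swapSet_of_ne hj1 hj2).2 hj)]
    · rw [heckeT_phi_nm hi hi1, map_add, map_smul, map_smul, thetaHat_phi_mem hj,
        thetaHat_phi_mem ((mem_swapSet_of_ne hj1 hj2).2 hj), smul_zero, smul_zero, add_zero]
    · rw [heckeT_phi_nn hi hi1, map_smul, thetaHat_phi_mem hj, smul_zero]
  · have hjs : j ∉ swapSet i E := fun h => hj ((mem_swapSet_of_ne hj1 hj2).1 h)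
    rw [thetaHat_phi_notMem hj, map_smul]
    have Hi : ∀ S : Finset ℕ, (i ∈ insert j S ↔ i ∈ S) := fun S => mem_insert_iff_of_ne (Ne.symm hj1)
    have Hi1 : ∀ S : Finset ℕ, (i + 1 ∈ insert j S ↔ i + 1 ∈ S) := fun S => mem_insert_iff_of_ne (Ne.symm hj2)
    by_cases hi : i ∈ E <;> by_cases hi1 : i + 1 ∈ E
    · rw [heckeT_phi_mm ((Hi E).2 hi) ((Hi1 E).2 hi1), heckeT_phi_mm hi hi1, map_neg,
        thetaHat_phi_notMem hj]
      module
    · rw [heckeT_phi_mn ((Hi E).2 hi) (fun h => hi1 ((Hi1 E).1 h)), heckeT_phi_mn hi hi1,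
        thetaHat_phi_notMem hjs, swapSet_insert_of_ne E hj1 hj2, filter_card_swapSet E hj2]
    · rw [heckeT_phi_nm (fun h => hi ((Hi E).1 h)) ((Hi1 E).2 hi1), heckeT_phi_nm hi hi1,
        map_add, map_smul, map_smul, thetaHat_phi_notMem hj, thetaHat_phi_notMem hjs,
        swapSet_insert_of_ne E hj1 hj2, filter_card_swapSet E hj2]
      module
    · rw [heckeT_phi_nn (fun h => hi ((Hi E).1 h)) (fun h => hi1 ((Hi1 E).1 h)),
        heckeT_phi_nn hi hi1, map_smul, thetaHat_phi_notMem hj]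
      module

theorem swapSet_erase_of_ne {i j : ℕ} (E : Finset ℕ) (hj1 : j ≠ i) (hj2 : j ≠ i + 1) :
    swapSet i (E.erase j) = (swapSet i E).erase j := by
  have : swapSet i (E.erase j) = ((swapSet i E).erase (Equiv.swap i (i+1) j)) := by
    rw [swapSet, swapSet, Finset.image_erase (Equiv.injective _)]
  rwa [Equiv.swap_apply_of_ne_of_ne hj1 hj2] at this

theorem T_ferm_far (t : K) {i j : ℕ} (hj1 : j ≠ i) (hj2 : j ≠ i + 1) (E : Finset ℕ) :
    heckeT t i (fermD K j (phi K E)) = fermD K j (heckeT t i (phi K E)) := by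
  by_cases hj : j ∈ E
  · have hjs : j ∈ swapSet i E := (mem_swapSet_of_ne hj1 hj2).2 hj
    rw [fermD_phi_mem hj, map_smul]
    have Hie : i ∈ E.erase j ↔ i ∈ E :=
      ⟨Finset.mem_of_mem_erase, fun h => Finset.mem_erase.2 ⟨Ne.symm hj1, h⟩⟩
    have Hi1e : i + 1 ∈ E.erase j ↔ i + 1 ∈ E :=
      ⟨Finset.mem_of_mem_erase, fun h => Finset.mem_erase.2 ⟨Ne.symm hj2, h⟩⟩
    by_cases hi : i ∈ E <;> by_cases hi1 : i + 1 ∈ E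
    · rw [heckeT_phi_mm (Hie.2 hi) (Hi1e.2 hi1), heckeT_phi_mm hi hi1, map_neg,
        fermD_phi_mem hj]
      module
    · rw [heckeT_phi_mn (Hie.2 hi) (fun h => hi1 (Hi1e.1 h)), heckeT_phi_mn hi hi1,
        fermD_phi_mem hjs, swapSet_erase_of_ne E hj1 hj2, filter_card_swapSet E hj2]
    · rw [heckeT_phi_nm (fun h => hi (Hie.1 h)) (Hi1e.2 hi1), heckeT_phi_nm hi hi1,
        map_add, map_smul, map_smul, fermD_phi_mem hj, fermD_phi_mem hjs,
        swapSet_erase_of_ne E hj1 hj2, filter_card_swapSet E hj2]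
      module
    · rw [heckeT_phi_nn (fun h => hi (Hie.1 h)) (fun h => hi1 (Hi1e.1 h)), heckeT_phi_nn hi hi1,
        map_smul, fermD_phi_mem hj]
      module
  · rw [fermD_phi_notMem hj, map_zero]
    have hjs : j ∉ swapSet i E := fun h => hj ((mem_swapSet_of_ne hj1 hj2).1 h)
    by_cases hi : i ∈ E <;> by_cases hi1 : i + 1 ∈ E
    · rw [heckeT_phi_mm hi hi1, map_neg, fermD_phi_notMem hj, neg_zero]
    · rw [heckeT_phi_mn hi hi1, fermD_phi_notMem hjs]
    · rw [heckeT_phi_nm hi hi1, map_add, map_smul, map_smul, fermD_phi_notMem hj,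
        fermD_phi_notMem hjs, smul_zero, smul_zero, add_zero]
    · rw [heckeT_phi_nn hi hi1, map_smul, fermD_phi_notMem hj, smul_zero]

end Part2

/-! ### Part 3: pair commutations -/
section Part3
variable {K : Type} [Field K]

theorem T_theta_pair (t : K) (i : ℕ) (E : Finset ℕ) :
    heckeT t i (thetaHat K i (phi K E) + thetaHat K (i + 1) (phi K E))
      = thetaHat K i (heckeT t i (phi K E)) + thetaHat K (i + 1) (heckeT t i (phi K E)) := by
  have hne : i ≠ i + 1 := by omega
  by_cases hi : i ∈ E <;> by_cases hi1 : i + 1 ∈ E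
  · -- both in E
    rw [thetaHat_phi_mem hi, thetaHat_phi_mem hi1, add_zero, map_zero, heckeT_phi_mm hi hi1,
      map_neg, map_neg, thetaHat_phi_mem hi, thetaHat_phi_mem hi1]
    simp
  · -- i ∈ E, i+1 ∉ E
    have h1 : i ∈ insert (i + 1) E := Finset.mem_insert_of_mem hi
    have h2 : i + 1 ∈ insert (i + 1) E := Finset.mem_insert_self _ _
    have hsw : i ∉ swapSet i E := by
      rw [mem_swapSet, Equiv.swap_apply_left]; exact hi1
    have hsw1 : i + 1 ∈ swapSet i E := by
      rw [mem_swapSet, Equiv.swap_apply_right]; exact hi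
    have hset : insert i (swapSet i E) = insert (i + 1) E := by
      rw [swapSet_of_mem hi hi1, Finset.insert_comm, Finset.insert_erase hi]
    rw [thetaHat_phi_mem hi, zero_add, thetaHat_phi_notMem hi1, map_smul,
      heckeT_phi_mm h1 h2, heckeT_phi_mn hi hi1, thetaHat_phi_notMem hsw,
      thetaHat_phi_mem hsw1, add_zero, hset, filter_card_swapSet E (by omega),
      filter_card_succ_of_mem hi, pow_succ]
    module
  · -- i ∉ E, i+1 ∈ E
    have h1 : i ∈ insert i E := Finset.mem_insert_self _ _
    have h2 : i + 1 ∈ insert i E := Finset.mem_insert_of_mem hi1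
    have hsw : i ∈ swapSet i E := by
      rw [mem_swapSet, Equiv.swap_apply_left]; exact hi1
    have hsw1 : i + 1 ∉ swapSet i E := by
      rw [mem_swapSet, Equiv.swap_apply_right]; exact hi
    have hset : insert (i + 1) (swapSet i E) = insert i E := by
      rw [swapSet_of_mem' hi1 hi, Finset.insert_comm, Finset.insert_erase hi1]
    have hie : i ∉ E.erase (i + 1) := fun h => hi (Finset.mem_of_mem_erase h)
    have hcard : ((swapSet i E).filter (· < i + 1)).card = (E.filter (· < i)).card + 1 := by
      rw [swapSet_of_mem' hi1 hi, filter_card_insert (i + 1) hie, if_pos (by omega)]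
      congr 1
      have e1 := filter_card_erase (i + 1) hi1 (E := E)
      rw [if_neg (by omega), add_zero] at e1
      rw [← e1, filter_card_succ_of_notMem hi]
    rw [thetaHat_phi_mem hi1, add_zero, thetaHat_phi_notMem hi, map_smul,
      heckeT_phi_mm h1 h2, heckeT_phi_nm hi hi1, map_add, map_add, map_smul, map_smul,
      map_smul, map_smul, thetaHat_phi_notMem hi, thetaHat_phi_mem hi1,
      thetaHat_phi_mem hsw, thetaHat_phi_notMem hsw1, hset, hcard, pow_succ]
    module
  · -- neither
    have h1 : i ∈ insert i E := Finset.mem_insert_self _ _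
    have h2 : i + 1 ∉ insert i E := by
      intro h; rcases Finset.mem_insert.1 h with h | h; · omega
      · exact hi1 h
    have h3 : i ∉ insert (i + 1) E := by
      intro h; rcases Finset.mem_insert.1 h with h | h; · omega
      · exact hi h
    have h4 : i + 1 ∈ insert (i + 1) E := Finset.mem_insert_self _ _
    have hset1 : swapSet i (insert i E) = insert (i + 1) E := by
      rw [swapSet_of_mem h1 h2, Finset.erase_insert hi]
    have hset2 : swapSet i (insert (i + 1) E) = insert i E := by
      rw [swapSet_of_mem' h4 h3, Finset.erase_insert hi1]
    rw [thetaHat_phi_notMem hi, thetaHat_phi_notMem hi1, map_add, map_smul, map_smul,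
      heckeT_phi_mn h1 h2, heckeT_phi_nm h3 h4, heckeT_phi_nn hi hi1, map_smul, map_smul,
      thetaHat_phi_notMem hi, thetaHat_phi_notMem hi1, hset1, hset2,
      filter_card_succ_of_notMem hi]
    module

theorem T_ferm_pair (t : K) (i : ℕ) (E : Finset ℕ) :
    heckeT t i (fermD K i (phi K E) + t • fermD K (i + 1) (phi K E))
      = fermD K i (heckeT t i (phi K E)) + t • fermD K (i + 1) (heckeT t i (phi K E)) := by
  by_cases hi : i ∈ E <;> by_cases hi1 : i + 1 ∈ E
  · -- both
    have e1 : i ∉ E.erase i := Finset.notMem_erase _ _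
    have e2 : i + 1 ∈ E.erase i := Finset.mem_erase.2 ⟨by omega, hi1⟩
    have e3 : i ∈ E.erase (i + 1) := Finset.mem_erase.2 ⟨by omega, hi⟩
    have e4 : i + 1 ∉ E.erase (i + 1) := Finset.notMem_erase _ _
    have hset1 : swapSet i (E.erase i) = E.erase (i + 1) := by
      rw [swapSet_of_mem' e2 e1, Finset.erase_right_comm, Finset.insert_erase e3]
    have hset2 : swapSet i (E.erase (i + 1)) = E.erase i := by
      rw [swapSet_of_mem e3 e4, Finset.erase_right_comm, Finset.insert_erase e2]
    rw [fermD_phi_mem hi, fermD_phi_mem hi1, map_add, map_smul, map_smul, map_smul,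
      heckeT_phi_nm e1 e2, heckeT_phi_mn e3 e4, heckeT_phi_mm hi hi1, map_neg, map_neg,
      fermD_phi_mem hi, fermD_phi_mem hi1, hset1, hset2, filter_card_succ_of_mem hi, pow_succ]
    module
  · -- i ∈ E, i+1 ∉
    have e1 : i ∉ E.erase i := Finset.notMem_erase _ _
    have e2 : i + 1 ∉ E.erase i := fun h => hi1 (Finset.mem_of_mem_erase h)
    have hsw : i ∉ swapSet i E := by rw [mem_swapSet, Equiv.swap_apply_left]; exact hi1
    have hsw1 : i + 1 ∈ swapSet i E := by rw [mem_swapSet, Equiv.swap_apply_right]; exact hi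
    have hset : (swapSet i E).erase (i + 1) = E.erase i := by
      rw [swapSet_of_mem hi hi1, Finset.erase_insert e2]
    have hcard : ((swapSet i E).filter (· < i + 1)).card = (E.filter (· < i)).card := by
      rw [swapSet_of_mem hi hi1, filter_card_insert (i + 1) e2, if_neg (by omega), add_zero]
      have e3 := filter_card_erase (i + 1) hi (E := E)
      rw [if_pos (by omega)] at e3
      have e4 := filter_card_succ_of_mem hi
      omega
    rw [fermD_phi_mem hi, fermD_phi_notMem hi1, smul_zero, add_zero, map_smul,
      heckeT_phi_nn e1 e2, heckeT_phi_mn hi hi1, fermD_phi_notMem hsw, fermD_phi_mem hsw1,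
      hset, hcard]
    module
  · -- i ∉ E, i+1 ∈
    have e3 : i ∉ E.erase (i + 1) := fun h => hi (Finset.mem_of_mem_erase h)
    have e4 : i + 1 ∉ E.erase (i + 1) := Finset.notMem_erase _ _
    have hsw : i ∈ swapSet i E := by rw [mem_swapSet, Equiv.swap_apply_left]; exact hi1
    have hsw1 : i + 1 ∉ swapSet i E := by rw [mem_swapSet, Equiv.swap_apply_right]; exact hi
    have hset : (swapSet i E).erase i = E.erase (i + 1) := by
      rw [swapSet_of_mem' hi1 hi, Finset.erase_insert e3]
    have hcard : ((swapSet i E).filter (· < i)).card = (E.filter (· < i)).card := by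
      rw [filter_card_swapSet E (by omega)]
    have hc1 : (E.filter (· < i + 1)).card = (E.filter (· < i)).card :=
      filter_card_succ_of_notMem hi
    rw [fermD_phi_notMem hi, zero_add, fermD_phi_mem hi1, map_smul, map_smul,
      heckeT_phi_nn e3 e4, heckeT_phi_nm hi hi1]
    simp only [map_add, map_smul, fermD_phi_notMem hi, fermD_phi_mem hi1, fermD_phi_mem hsw,
      fermD_phi_notMem hsw1, smul_zero, zero_add, add_zero, hset, hcard, hc1]
    module
  · -- neither
    rw [fermD_phi_notMem hi, fermD_phi_notMem hi1, smul_zero, add_zero, map_zero,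
      heckeT_phi_nn hi hi1, map_smul, map_smul, fermD_phi_notMem hi, fermD_phi_notMem hi1]
    simp

end Part3

/-! ### Part 4: operator commutation and nilpotency -/
section Part4
variable {K : Type} [Field K]

theorem TM_comm (t : K) {N i : ℕ} (hi : 1 ≤ i) (hiN : i + 1 ≤ N) (x : SP K) :
    heckeT t i (opM K N x) = opM K N (heckeT t i x) := by
  have hop : heckeT t i ∘ₗ opM K N = opM K N ∘ₗ heckeT t i := by
    apply SP_lhom_ext
    intro E
    have hpair : ({i, i + 1} : Finset ℕ) ⊆ Finset.Icc 1 N := by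
      intro x hx
      rcases Finset.mem_insert.1 hx with rfl | hx
      · simp [Finset.mem_Icc]; omega
      · rw [Finset.mem_singleton.1 hx]; simp [Finset.mem_Icc]; omega
    have hii : i ∉ ({i + 1} : Finset ℕ) := by simp
    rw [LinearMap.comp_apply, LinearMap.comp_apply, opM_apply, opM_apply,
      ← Finset.sum_sdiff hpair, ← Finset.sum_sdiff hpair, map_add]
    congr 1
    · rw [map_sum]
      refine Finset.sum_congr rfl fun j hj => ?_
      rw [Finset.mem_sdiff, Finset.mem_insert, Finset.mem_singleton] at hj
      exact T_theta_far t (fun h => hj.2 (Or.inl h)) (fun h => hj.2 (Or.inr h)) E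
    · rw [Finset.sum_insert hii, Finset.sum_insert hii, Finset.sum_singleton,
        Finset.sum_singleton]
      exact T_theta_pair t i E
  exact LinearMap.ext_iff.1 hop x

theorem TD_comm (t : K) {N i : ℕ} (hi : 1 ≤ i) (hiN : i + 1 ≤ N) (x : SP K) :
    heckeT t i (opD t N x) = opD t N (heckeT t i x) := by
  have hop : heckeT t i ∘ₗ opD t N = opD t N ∘ₗ heckeT t i := by
    apply SP_lhom_ext
    intro E
    have hpair : ({i, i + 1} : Finset ℕ) ⊆ Finset.Icc 1 N := by
      intro x hx
      rcases Finset.mem_insert.1 hx with rfl | hx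
      · simp [Finset.mem_Icc]; omega
      · rw [Finset.mem_singleton.1 hx]; simp [Finset.mem_Icc]; omega
    have hii : i ∉ ({i + 1} : Finset ℕ) := by simp
    have hpow : t ^ (i + 1 - 1) = t ^ (i - 1) * t := by
      rw [← pow_succ]
      congr 1
      omega
    rw [LinearMap.comp_apply, LinearMap.comp_apply, opD_apply, opD_apply,
      ← Finset.sum_sdiff hpair, ← Finset.sum_sdiff hpair, map_add]
    congr 1
    · rw [map_sum]
      refine Finset.sum_congr rfl fun j hj => ?_
      rw [Finset.mem_sdiff, Finset.mem_insert, Finset.mem_singleton] at hj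
      rw [map_smul, T_ferm_far t (fun h => hj.2 (Or.inl h)) (fun h => hj.2 (Or.inr h)) E]
    · rw [Finset.sum_insert hii, Finset.sum_insert hii, Finset.sum_singleton,
        Finset.sum_singleton, hpow]
      have := T_ferm_pair t i E
      calc heckeT t i (t ^ (i - 1) • fermD K i (phi K E)
              + (t ^ (i - 1) * t) • fermD K (i + 1) (phi K E))
          = t ^ (i - 1) • heckeT t i (fermD K i (phi K E) + t • fermD K (i + 1) (phi K E)) := by
            simp only [map_add, map_smul, smul_add, smul_smul]
        _ = t ^ (i - 1) • (fermD K i (heckeT t i (phi K E))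
              + t • fermD K (i + 1) (heckeT t i (phi K E))) := by rw [this]
        _ = t ^ (i - 1) • fermD K i (heckeT t i (phi K E))
              + (t ^ (i - 1) * t) • fermD K (i + 1) (heckeT t i (phi K E)) := by
            rw [smul_add, smul_smul]
  exact LinearMap.ext_iff.1 hop x

theorem omegaAux_comm (t : K) {N : ℕ} (f : SP K →ₗ[K] SP K)
    (hf : ∀ j, 1 ≤ j → j + 1 ≤ N → ∀ y : SP K, heckeT t j (f y) = f (heckeT t j y)) :
    ∀ d i, 1 ≤ i → i + d ≤ N → ∀ x : SP K, omegaAux t d i (f x) = f (omegaAux t d i x) := by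
  intro d
  induction d with
  | zero => intro i _ _ x; simp [omegaAux]
  | succ d ih =>
    intro i h1 h2 x
    rw [omegaAux_succ_apply, omegaAux_succ_apply, hf i h1 (by omega),
      ih (i + 1) (by omega) (by omega), hf i h1 (by omega), map_smul]

theorem omega_M_comm (t : K) {N i : ℕ} (hi : 1 ≤ i) (hiN : i ≤ N) (x : SP K) :
    omega t N i (opM K N x) = opM K N (omega t N i x) := by
  exact omegaAux_comm t (opM K N) (fun j hj hjN y => TM_comm t hj hjN y)
    (N - i) i hi (by omega) x

theorem omega_D_comm (t : K) {N i : ℕ} (hi : 1 ≤ i) (hiN : i ≤ N) (x : SP K) :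
    omega t N i (opD t N x) = opD t N (omega t N i x) := by
  exact omegaAux_comm t (opD t N) (fun j hj hjN y => TD_comm t hj hjN y)
    (N - i) i hi (by omega) x

/-! #### nilpotency -/

theorem theta_anticomm (i j : ℕ) (x : SP K) :
    thetaHat K i (thetaHat K j x) + thetaHat K j (thetaHat K i x) = 0 := by
  have hop : thetaHat K i ∘ₗ thetaHat K j + thetaHat K j ∘ₗ thetaHat K i = 0 := by
    apply SP_lhom_ext
    intro E
    simp only [LinearMap.add_apply, LinearMap.comp_apply, LinearMap.zero_apply]
    by_cases hij : i = j
    · subst hij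
      by_cases hi : i ∈ E
      · rw [thetaHat_phi_mem hi, map_zero, add_zero]
      · rw [thetaHat_phi_notMem hi, map_smul,
          thetaHat_phi_mem (Finset.mem_insert_self _ _), smul_zero, add_zero]
    · by_cases hi : i ∈ E
      · rw [thetaHat_phi_mem hi, map_zero, add_zero]
        by_cases hj : j ∈ E
        · rw [thetaHat_phi_mem hj, map_zero]
        · rw [thetaHat_phi_notMem hj, map_smul,
            thetaHat_phi_mem (Finset.mem_insert_of_mem hi), smul_zero]
      · by_cases hj : j ∈ E
        · rw [thetaHat_phi_mem hj, map_zero, zero_add, thetaHat_phi_notMem hi, map_smul,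
            thetaHat_phi_mem (Finset.mem_insert_of_mem hj), smul_zero]
        · have hij' : i ∉ insert j E := by
            rw [Finset.mem_insert]; push_neg; exact ⟨hij, hi⟩
          have hji' : j ∉ insert i E := by
            rw [Finset.mem_insert]; push_neg; exact ⟨fun h => hij h.symm, hj⟩
          rw [thetaHat_phi_notMem hj, map_smul, thetaHat_phi_notMem hij',
            thetaHat_phi_notMem hi, map_smul, thetaHat_phi_notMem hji',
            filter_card_insert i hj, filter_card_insert j hi, Finset.insert_comm]
          rcases lt_or_gt_of_ne hij with h | h
          · rw [if_neg (by omega), if_pos h, add_zero, pow_succ]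
            module
          · rw [if_pos h, if_neg (by omega), add_zero, pow_succ]
            module
  have := LinearMap.ext_iff.1 hop x
  simpa using this

theorem ferm_anticomm (i j : ℕ) (x : SP K) :
    fermD K i (fermD K j x) + fermD K j (fermD K i x) = 0 := by
  have hop : fermD K i ∘ₗ fermD K j + fermD K j ∘ₗ fermD K i = 0 := by
    apply SP_lhom_ext
    intro E
    simp only [LinearMap.add_apply, LinearMap.comp_apply, LinearMap.zero_apply]
    by_cases hij : i = j
    · subst hij
      by_cases hi : i ∈ E
      · rw [fermD_phi_mem hi, map_smul, fermD_phi_notMem (Finset.notMem_erase _ _),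
          smul_zero, add_zero]
      · rw [fermD_phi_notMem hi, map_zero, add_zero]
    · by_cases hi : i ∈ E
      · by_cases hj : j ∈ E
        · have hie : i ∈ E.erase j := Finset.mem_erase.2 ⟨hij, hi⟩
          have hje : j ∈ E.erase i := Finset.mem_erase.2 ⟨fun h => hij h.symm, hj⟩
          rw [fermD_phi_mem hj, map_smul, fermD_phi_mem hie,
            fermD_phi_mem hi, map_smul, fermD_phi_mem hje, Finset.erase_right_comm]
          have c1 := filter_card_erase i hj (E := E)
          have c2 := filter_card_erase j hi (E := E)
          rcases lt_or_gt_of_ne hij with h | h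
          · rw [if_neg (by omega), add_zero] at c1
            rw [if_pos h, ] at c2
            rw [← c1]
            have : (E.filter (· < j)).card = ((E.erase i).filter (· < j)).card + 1 := c2
            rw [this, pow_succ]
            module
          · rw [if_pos h] at c1
            rw [if_neg (by omega), add_zero] at c2
            rw [← c2]
            have : (E.filter (· < i)).card = ((E.erase j).filter (· < i)).card + 1 := c1
            rw [this, pow_succ]
            module
        · rw [fermD_phi_notMem hj, map_zero, zero_add, fermD_phi_mem hi, map_smul,
            fermD_phi_notMem (fun h => hj (Finset.mem_of_mem_erase h)), smul_zero]
      · rw [fermD_phi_notMem hi, map_zero, add_zero]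
        by_cases hj : j ∈ E
        · rw [fermD_phi_mem hj, map_smul,
            fermD_phi_notMem (fun h => hi (Finset.mem_of_mem_erase h)), smul_zero]
        · rw [fermD_phi_notMem hj, map_zero]
  have := LinearMap.ext_iff.1 hop x
  simpa using this

theorem theta_sq (i : ℕ) (x : SP K) : thetaHat K i (thetaHat K i x) = 0 := by
  have hop : thetaHat K i ∘ₗ thetaHat K i = 0 := by
    apply SP_lhom_ext
    intro E
    simp only [LinearMap.comp_apply, LinearMap.zero_apply]
    by_cases hi : i ∈ E
    · rw [thetaHat_phi_mem hi, map_zero]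
    · rw [thetaHat_phi_notMem hi, map_smul,
        thetaHat_phi_mem (Finset.mem_insert_self _ _), smul_zero]
  simpa using LinearMap.ext_iff.1 hop x

theorem ferm_sq (i : ℕ) (x : SP K) : fermD K i (fermD K i x) = 0 := by
  have hop : fermD K i ∘ₗ fermD K i = 0 := by
    apply SP_lhom_ext
    intro E
    simp only [LinearMap.comp_apply, LinearMap.zero_apply]
    by_cases hi : i ∈ E
    · rw [fermD_phi_mem hi, map_smul, fermD_phi_notMem (Finset.notMem_erase _ _), smul_zero]
    · rw [fermD_phi_notMem hi, map_zero]
  simpa using LinearMap.ext_iff.1 hop x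

theorem Msq (N : ℕ) (x : SP K) : opM K N (opM K N x) = 0 := by
  have hrw : opM K N (opM K N x)
      = ∑ p ∈ Finset.Icc 1 N ×ˢ Finset.Icc 1 N, thetaHat K p.1 (thetaHat K p.2 x) := by
    rw [Finset.sum_product]
    rw [opM_apply (x := opM K N x)]
    refine Finset.sum_congr rfl fun j _ => ?_
    rw [opM_apply (x := x), map_sum]
  rw [hrw]
  refine Finset.sum_involution (fun p _ => p.swap) ?_ ?_ ?_ ?_
  · intro p _
    exact theta_anticomm p.1 p.2 x
  · intro p _ hp h
    apply hp
    have h1 : p.2 = p.1 := (Prod.ext_iff.1 h).1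
    rw [h1]
    exact theta_sq p.1 x
  · intro p hp
    rw [Finset.mem_product] at hp ⊢
    exact ⟨hp.2, hp.1⟩
  · intro p _
    rfl

theorem Dsq (t : K) (N : ℕ) (x : SP K) : opD t N (opD t N x) = 0 := by
  have hrw : opD t N (opD t N x)
      = ∑ p ∈ Finset.Icc 1 N ×ˢ Finset.Icc 1 N,
          (t ^ (p.1 - 1) * t ^ (p.2 - 1)) • fermD K p.1 (fermD K p.2 x) := by
    rw [Finset.sum_product]
    rw [opD_apply (x := opD t N x)]
    refine Finset.sum_congr rfl fun j _ => ?_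
    rw [opD_apply (x := x), map_sum, Finset.smul_sum]
    refine Finset.sum_congr rfl fun k _ => ?_
    rw [map_smul, smul_comm, smul_smul, mul_comm]
  rw [hrw]
  refine Finset.sum_involution (fun p _ => p.swap) ?_ ?_ ?_ ?_
  · intro p _
    show (t ^ (p.1 - 1) * t ^ (p.2 - 1)) • fermD K p.1 (fermD K p.2 x)
        + (t ^ (p.2 - 1) * t ^ (p.1 - 1)) • fermD K p.2 (fermD K p.1 x) = 0
    rw [mul_comm (t ^ (p.2 - 1)), ← smul_add, ferm_anticomm, smul_zero]
  · intro p _ hp h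
    apply hp
    have h1 : p.2 = p.1 := (Prod.ext_iff.1 h).1
    show (t ^ (p.1 - 1) * t ^ (p.2 - 1)) • fermD K p.1 (fermD K p.2 x) = 0
    rw [h1, ferm_sq, smul_zero]
  · intro p hp
    rw [Finset.mem_product] at hp ⊢
    exact ⟨hp.2, hp.1⟩
  · intro p _
    rfl

end Part4
/-! ### Part 5: tau1 and its omega-eigenvector property -/
section Part5
variable {K : Type} [Field K]

theorem M_phi_Icc {b N : ℕ} (hbN : b ≤ N) :
    opM K N (phi K (Finset.Icc 1 b))
      = ∑ i ∈ Finset.Icc (b + 1) N, ((-1 : K) ^ b) • phi K (insert i (Finset.Icc 1 b)) := by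
  have hsplit : Finset.Icc 1 N = Finset.Icc 1 b ∪ Finset.Icc (b + 1) N := by
    ext a; simp only [Finset.mem_Icc, Finset.mem_union]; omega
  have hdisj : Disjoint (Finset.Icc 1 b) (Finset.Icc (b + 1) N) := by
    rw [Finset.disjoint_left]
    intro a ha ha'
    rw [Finset.mem_Icc] at ha ha'
    omega
  rw [opM_apply, hsplit, Finset.sum_union hdisj]
  have h1 : ∑ j ∈ Finset.Icc 1 b, thetaHat K j (phi K (Finset.Icc 1 b)) = 0 := by
    refine Finset.sum_eq_zero fun j hj => thetaHat_phi_mem hj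
  rw [h1, zero_add]
  refine Finset.sum_congr rfl fun j hj => ?_
  rw [Finset.mem_Icc] at hj
  have hjn : j ∉ Finset.Icc 1 b := by rw [Finset.mem_Icc]; omega
  rw [thetaHat_phi_notMem hjn]
  congr 2
  rw [Finset.filter_true_of_mem fun x hx => by rw [Finset.mem_Icc] at hx; omega]
  rw [Nat.card_Icc]
  omega

theorem insert_Icc_self {m : ℕ} (hm : 1 ≤ m) : insert m (Finset.Icc 1 (m - 1)) = Finset.Icc 1 m := by
  ext a; simp only [Finset.mem_insert, Finset.mem_Icc]; omega

theorem erase_Icc_self {m : ℕ} : (Finset.Icc 1 m).erase m = Finset.Icc 1 (m - 1) := by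
  ext a; simp only [Finset.mem_erase, Finset.mem_Icc]; omega

theorem T_tau1_low (t : K) {N m k : ℕ} (hk1 : 1 ≤ k) (hk2 : k + 1 ≤ m) (hmN : m ≤ N) :
    heckeT t k (opM K N (phi K (Finset.Icc 1 m))) = -(opM K N (phi K (Finset.Icc 1 m))) := by
  rw [TM_comm t hk1 (by omega), heckeT_phi_mm (by rw [Finset.mem_Icc]; omega)
    (by rw [Finset.mem_Icc]; omega), map_neg]

theorem T_tau1_high (t : K) {N m k : ℕ} (hk1 : m + 1 ≤ k) (hk2 : k + 1 ≤ N) :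
    heckeT t k (opM K N (phi K (Finset.Icc 1 m))) = t • opM K N (phi K (Finset.Icc 1 m)) := by
  rw [TM_comm t (by omega) (by omega), heckeT_phi_nn (by rw [Finset.mem_Icc]; omega)
    (by rw [Finset.mem_Icc]; omega), map_smul]

theorem T_tau1_m (t : K) {N m : ℕ} (hm : 1 ≤ m) (hmN : m + 1 ≤ N) :
    heckeT t m (opM K N (phi K (Finset.Icc 1 m)))
      = opM K N (phi K (insert (m + 1) (Finset.Icc 1 (m - 1)))) := by
  rw [TM_comm t hm (by omega), heckeT_phi_mn (by rw [Finset.mem_Icc]; omega)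
    (by rw [Finset.mem_Icc]; omega),
    swapSet_of_mem (by rw [Finset.mem_Icc]; omega) (by rw [Finset.mem_Icc]; omega),
    erase_Icc_self]

theorem omegaAux_u (t : K) (ht : t ≠ 0) {N m : ℕ} :
    ∀ d k, k + d = N → m + 1 ≤ k →
      omegaAux t d k (phi K (insert k (Finset.Icc 1 (m - 1))))
        = phi K (insert k (Finset.Icc 1 (m - 1)))
          + (1 - t⁻¹) • ∑ s ∈ Finset.Icc (k + 1) N, phi K (insert s (Finset.Icc 1 (m - 1))) := by
  intro d
  induction d with
  | zero =>
    intro k hk hmk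
    have : Finset.Icc (k + 1) N = ∅ := Finset.Icc_eq_empty (by omega)
    rw [this, Finset.sum_empty, smul_zero, add_zero]
    simp [omegaAux]
  | succ d ih =>
    intro k hk hmk
    have hknotin : k ∉ Finset.Icc 1 (m - 1) := by rw [Finset.mem_Icc]; omega
    have hk1notin : k + 1 ∉ Finset.Icc 1 (m - 1) := by rw [Finset.mem_Icc]; omega
    have hkii : k ∉ insert (k + 1) (Finset.Icc 1 (m - 1)) := by
      rw [Finset.mem_insert]; push_neg; exact ⟨by omega, hknotin⟩
    have hk1ii : k + 1 ∉ insert k (Finset.Icc 1 (m - 1)) := by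
      rw [Finset.mem_insert]; push_neg; exact ⟨by omega, hk1notin⟩
    have hTk : heckeT t k (phi K (insert k (Finset.Icc 1 (m - 1))))
        = phi K (insert (k + 1) (Finset.Icc 1 (m - 1))) := by
      rw [heckeT_phi_mn (Finset.mem_insert_self _ _) hk1ii,
        swapSet_of_mem (Finset.mem_insert_self _ _) hk1ii, Finset.erase_insert hknotin]
    have hTk1 : heckeT t k (phi K (insert (k + 1) (Finset.Icc 1 (m - 1))))
        = (t - 1) • phi K (insert (k + 1) (Finset.Icc 1 (m - 1)))
          + t • phi K (insert k (Finset.Icc 1 (m - 1))) := by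
      rw [heckeT_phi_nm hkii (Finset.mem_insert_self _ _),
        swapSet_of_mem' (Finset.mem_insert_self _ _) hkii, Finset.erase_insert hk1notin]
    rw [omegaAux_succ_apply, hTk, ih (k + 1) (by omega) (by omega), map_add, map_smul, hTk1,
      map_sum]
    have hsum : ∀ s ∈ Finset.Icc (k + 2) N,
        heckeT t k (phi K (insert s (Finset.Icc 1 (m - 1))))
          = t • phi K (insert s (Finset.Icc 1 (m - 1))) := by
      intro s hs
      rw [Finset.mem_Icc] at hs
      refine heckeT_phi_nn ?_ ?_ <;> rw [Finset.mem_insert, Finset.mem_Icc] <;> push_neg <;>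
        constructor <;> omega
    rw [Finset.sum_congr rfl hsum]
    have hpeel : Finset.Icc (k + 1) N = insert (k + 1) (Finset.Icc (k + 2) N) := by
      rw [show Finset.Icc (k + 2) N = Finset.Ioc (k + 1) N from ?_, Finset.Ioc_insert_left (by omega)]
      ext a; simp only [Finset.mem_Icc, Finset.mem_Ioc]; omega
    rw [hpeel, Finset.sum_insert (by rw [Finset.mem_Icc]; omega), ← Finset.smul_sum]
    match_scalars <;> (try field_simp) <;> (try ring)

theorem omegaAux_tau1_high (t : K) (ht : t ≠ 0) {N m : ℕ} :
    ∀ d k, k + d = N → m + 1 ≤ k →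
      omegaAux t d k (opM K N (phi K (Finset.Icc 1 m)))
        = t ^ d • opM K N (phi K (Finset.Icc 1 m)) := by
  intro d
  induction d with
  | zero => intro k hk hmk; simp [omegaAux]
  | succ d ih =>
    intro k hk hmk
    rw [omegaAux_succ_apply, T_tau1_high t hmk (by omega), map_smul,
      ih (k + 1) (by omega) (by omega)]
    rw [map_smul, map_smul, T_tau1_high t hmk (by omega)]
    rw [smul_smul, smul_smul, smul_smul]
    congr 1
    field_simp
    try ring

theorem M_sum_u {N m : ℕ} (hm : 1 ≤ m) (hmN : m ≤ N) :
    opM K N (∑ s ∈ Finset.Icc (m + 1) N, phi K (insert s (Finset.Icc 1 (m - 1))))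
      = -(opM K N (phi K (Finset.Icc 1 m))) := by
  have h0 : opM K N (phi K (Finset.Icc 1 (m - 1)))
      = ((-1 : K) ^ (m - 1)) • ∑ i ∈ Finset.Icc m N, phi K (insert i (Finset.Icc 1 (m - 1))) := by
    rw [M_phi_Icc (by omega), show m - 1 + 1 = m from by omega, Finset.smul_sum]
  have h1 : opM K N (((-1 : K) ^ (m - 1))
      • ∑ i ∈ Finset.Icc m N, phi K (insert i (Finset.Icc 1 (m - 1)))) = 0 := by
    rw [← h0, Msq]
  rw [map_smul, smul_eq_zero] at h1
  have h2 : opM K N (∑ i ∈ Finset.Icc m N, phi K (insert i (Finset.Icc 1 (m - 1)))) = 0 := by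
    rcases h1 with h1 | h1
    · exact absurd h1 (by simp)
    · exact h1
  have hpeel : Finset.Icc m N = insert m (Finset.Icc (m + 1) N) := by
    rw [show Finset.Icc (m + 1) N = Finset.Ioc m N from ?_, Finset.Ioc_insert_left hmN]
    ext a; simp only [Finset.mem_Icc, Finset.mem_Ioc]; omega
  rw [hpeel, Finset.sum_insert (by rw [Finset.mem_Icc]; omega), map_add,
    insert_Icc_self hm] at h2
  linear_combination (norm := module) h2

theorem omega_tau1_m (t : K) (ht : t ≠ 0) {N m : ℕ} (hm : 1 ≤ m) (hmN : m + 1 ≤ N) :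
    omegaAux t (N - m) m (opM K N (phi K (Finset.Icc 1 m)))
      = t⁻¹ • opM K N (phi K (Finset.Icc 1 m)) := by
  have hd : N - m = (N - m - 1) + 1 := by omega
  have hu := omegaAux_u (N := N) (m := m) t ht (N - m - 1) (m + 1) (by omega) (by omega)
  rw [hd, omegaAux_succ_apply, T_tau1_m t hm hmN,
    omegaAux_comm t (opM K N) (fun j hj hjN y => TM_comm t hj hjN y) (N - m - 1) (m + 1)
      (by omega) (by omega), hu]
  have hmnotin : m ∉ insert (m + 1) (Finset.Icc 1 (m - 1)) := by
    rw [Finset.mem_insert, Finset.mem_Icc]; push_neg; constructor <;> omega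
  have hTm1 : heckeT t m (phi K (insert (m + 1) (Finset.Icc 1 (m - 1))))
      = (t - 1) • phi K (insert (m + 1) (Finset.Icc 1 (m - 1)))
        + t • phi K (Finset.Icc 1 m) := by
    rw [heckeT_phi_nm hmnotin (Finset.mem_insert_self _ _),
      swapSet_of_mem' (Finset.mem_insert_self _ _) hmnotin,
      Finset.erase_insert (by rw [Finset.mem_Icc]; omega), insert_Icc_self hm]
  have hsum : ∀ s ∈ Finset.Icc (m + 1 + 1) N,
      heckeT t m (phi K (insert s (Finset.Icc 1 (m - 1))))
        = t • phi K (insert s (Finset.Icc 1 (m - 1))) := by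
    intro s hs
    rw [Finset.mem_Icc] at hs
    refine heckeT_phi_nn ?_ ?_ <;> rw [Finset.mem_insert, Finset.mem_Icc] <;> push_neg <;>
      constructor <;> omega
  rw [TM_comm t hm hmN, map_add, map_smul, hTm1, map_sum, Finset.sum_congr rfl hsum,
    ← Finset.smul_sum]
  have hpeel : Finset.Icc (m + 1) N = insert (m + 1) (Finset.Icc (m + 1 + 1) N) := by
    rw [show Finset.Icc (m + 1 + 1) N = Finset.Ioc (m + 1) N from ?_,
      Finset.Ioc_insert_left (by omega)]
    ext a; simp only [Finset.mem_Icc, Finset.mem_Ioc]; omega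
  have hMW := M_sum_u (K := K) (N := N) (m := m) hm (by omega)
  rw [hpeel, Finset.sum_insert (by rw [Finset.mem_Icc]; omega), map_add] at hMW
  simp only [map_add, map_smul]
  have key : opM K N (∑ x ∈ Finset.Icc (m + 1 + 1) N, phi K (insert x (Finset.Icc 1 (m - 1))))
      = -(opM K N (phi K (Finset.Icc 1 m)))
        - opM K N (phi K (insert (m + 1) (Finset.Icc 1 (m - 1)))) := by
    linear_combination (norm := module) hMW
  rw [key]
  match_scalars <;> (try field_simp) <;> (try ring) <;> (try tauto)

theorem omega_tau1_low (t : K) (ht : t ≠ 0) {N m : ℕ} (hm : 1 ≤ m) (hmN : m + 1 ≤ N) :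
    ∀ j, j ≤ m - 1 →
      omegaAux t (N - (m - j)) (m - j) (opM K N (phi K (Finset.Icc 1 m)))
        = (t⁻¹) ^ (j + 1) • opM K N (phi K (Finset.Icc 1 m)) := by
  intro j
  induction j with
  | zero =>
    intro _
    rw [show m - 0 = m from rfl, pow_one]
    exact omega_tau1_m t ht hm hmN
  | succ j ih =>
    intro hj
    have hi : m - (j + 1) + 1 = m - j := by omega
    have hd : N - (m - (j + 1)) = (N - (m - j)) + 1 := by omega
    rw [hd, omegaAux_succ_apply,
      T_tau1_low t (by omega) (by omega) (by omega)]
    rw [map_neg, show m - (j + 1) + 1 = m - j from by omega, ih (by omega), map_neg, map_smul,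
      T_tau1_low t (by omega) (by omega) (by omega)]
    match_scalars
    ring

end Part5

/-! ### Part 6: eigen combination and sform basics -/
section Part6
variable {K : Type} [Field K]

theorem omega_tau1_eigen (t : K) (ht : t ≠ 0) {N m : ℕ} (hmN : m + 1 ≤ N) :
    ∀ i, 1 ≤ i → i ≤ N →
      omega t N i (opM K N (phi K (Finset.Icc 1 m)))
        = (if i ≤ m then (t⁻¹) ^ (m + 1 - i) else t ^ (N - i)) • opM K N (phi K (Finset.Icc 1 m)) := by
  intro i h1 hN
  by_cases him : i ≤ m
  · rw [if_pos him]
    have hm : 1 ≤ m := le_trans h1 him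
    have h := omega_tau1_low t ht hm hmN (m - i) (by omega)
    rw [show m - (m - i) = i from by omega, show m - i + 1 = m + 1 - i from by omega] at h
    exact h
  · rw [if_neg him]
    exact omegaAux_tau1_high (m := m) t ht (N - i) i (by omega) (by omega)

theorem sform_phi_left (t : K) (N : ℕ) (E : Finset ℕ) (g : SP K) :
    sform t N (phi K E) g = g E * t⁻¹ ^ invE N E := by
  rw [sform, phi, Finsupp.sum_single_index]
  · rw [one_mul]
  · rw [zero_mul, zero_mul]

theorem sform_zero_left (t : K) (N : ℕ) (g : SP K) : sform t N 0 g = 0 := by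
  rw [sform, Finsupp.sum_zero_index]

theorem sform_add_left (t : K) (N : ℕ) (f1 f2 g : SP K) :
    sform t N (f1 + f2) g = sform t N f1 g + sform t N f2 g := by
  unfold sform
  apply Finsupp.sum_add_index'
  · intro E; rw [zero_mul, zero_mul]
  · intro E c1 c2; rw [add_mul, add_mul]

theorem sform_smul_left (t : K) (N : ℕ) (c : K) (f g : SP K) :
    sform t N (c • f) g = c * sform t N f g := by
  unfold sform
  rw [Finsupp.sum_smul_index (fun i => by rw [zero_mul, zero_mul]), Finsupp.mul_sum]
  exact Finset.sum_congr rfl fun E _ => by ring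

theorem sform_sum_left {ι : Type} (t : K) (N : ℕ) (s : Finset ι) (f : ι → SP K) (g : SP K) :
    sform t N (∑ a ∈ s, f a) g = ∑ a ∈ s, sform t N (f a) g := by
  induction s using Finset.cons_induction with
  | empty => rw [Finset.sum_empty, Finset.sum_empty, sform_zero_left]
  | cons a s ha ih =>
    rw [Finset.sum_cons, Finset.sum_cons, sform_add_left, ih]

theorem sform_smul_right (t : K) (N : ℕ) (c : K) (f g : SP K) :
    sform t N f (c • g) = c * sform t N f g := by
  unfold sform
  rw [Finsupp.mul_sum]
  refine Finset.sum_congr rfl fun E _ => ?_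
  show f E * (c • g) E * t⁻¹ ^ invE N E = c * (f E * g E * t⁻¹ ^ invE N E)
  rw [Finsupp.smul_apply, smul_eq_mul]
  ring

theorem phi_apply (E F : Finset ℕ) : phi K E F = if E = F then 1 else 0 := by
  rw [phi, Finsupp.single_apply]

theorem neg_one_pow_mul_self (a : ℕ) : ((-1 : K) ^ a) * ((-1 : K) ^ a) = 1 := by
  rw [← pow_add]
  exact Even.neg_one_pow ⟨a, rfl⟩

end Part6

/-! ### Part 7: invE computations -/
section Part7
variable {K : Type} [Field K]

theorem invE_eq_sum (N : ℕ) (E : Finset ℕ) :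
    invE N E = ∑ a ∈ E, ((Finset.Icc 1 N \ E).filter (a < ·)).card := by
  rw [invE, Finset.card_eq_sum_card_fiberwise (f := Prod.fst) (t := E)
    (fun x hx => (Finset.mem_product.1 (Finset.mem_of_mem_filter _ hx)).1)]
  refine Finset.sum_congr rfl fun a ha => ?_
  have hbij : (((E ×ˢ (Finset.Icc 1 N \ E)).filter fun p => p.1 < p.2).filter
      fun x => x.1 = a) = ((Finset.Icc 1 N \ E).filter (a < ·)).image (fun b => (a, b)) := by
    ext ⟨x1, x2⟩
    simp only [Finset.mem_filter, Finset.mem_product, Finset.mem_image, Prod.mk.injEq]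
    constructor
    · rintro ⟨⟨⟨_, hx2⟩, hlt⟩, rfl⟩
      exact ⟨x2, ⟨hx2, hlt⟩, rfl, rfl⟩
    · rintro ⟨b, ⟨hb, hab⟩, rfl, rfl⟩
      exact ⟨⟨⟨ha, hb⟩, hab⟩, rfl⟩
  rw [hbij, Finset.card_image_of_injective _ (fun x y hxy => congrArg Prod.snd hxy)]

theorem invE_A {N m : ℕ} (hmN : m ≤ N) : invE N (Finset.Icc 1 m) = m * (N - m) := by
  rw [invE_eq_sum]
  have hcomp : Finset.Icc 1 N \ Finset.Icc 1 m = Finset.Icc (m + 1) N := by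
    ext a; simp only [Finset.mem_sdiff, Finset.mem_Icc]; omega
  rw [hcomp]
  have hval : ∀ a ∈ Finset.Icc 1 m, ((Finset.Icc (m + 1) N).filter (a < ·)).card = N - m := by
    intro a ha
    rw [Finset.mem_Icc] at ha
    rw [Finset.filter_true_of_mem (fun x hx => by rw [Finset.mem_Icc] at hx; omega),
      Nat.card_Icc]
    omega
  rw [Finset.sum_congr rfl hval, Finset.sum_const, Nat.card_Icc, smul_eq_mul]
  simp

theorem invE_insA {N m i : ℕ} (him : m + 1 ≤ i) (hiN : i ≤ N) :
    invE N (insert i (Finset.Icc 1 m)) = m * (N - m - 1) + (N - i) := by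
  rw [invE_eq_sum]
  have hcomp : Finset.Icc 1 N \ insert i (Finset.Icc 1 m) = (Finset.Icc (m + 1) N).erase i := by
    ext a
    simp only [Finset.mem_sdiff, Finset.mem_insert, Finset.mem_Icc, Finset.mem_erase]
    omega
  rw [hcomp, Finset.sum_insert (by rw [Finset.mem_Icc]; omega)]
  have hfib_i : (((Finset.Icc (m + 1) N).erase i).filter (i < ·)).card = N - i := by
    have : ((Finset.Icc (m + 1) N).erase i).filter (i < ·) = Finset.Icc (i + 1) N := by
      ext a; simp only [Finset.mem_filter, Finset.mem_erase, Finset.mem_Icc]; omega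
    rw [this, Nat.card_Icc]; omega
  have hval : ∀ a ∈ Finset.Icc 1 m,
      (((Finset.Icc (m + 1) N).erase i).filter (a < ·)).card = N - m - 1 := by
    intro a ha
    rw [Finset.mem_Icc] at ha
    rw [Finset.filter_true_of_mem
      (fun x hx => by
        have := Finset.mem_of_mem_erase hx
        rw [Finset.mem_Icc] at this; omega),
      Finset.card_erase_of_mem (by rw [Finset.mem_Icc]; omega), Nat.card_Icc]
    omega
  rw [hfib_i, Finset.sum_congr rfl hval, Finset.sum_const, Nat.card_Icc, smul_eq_mul]
  have : m + 1 - 1 = m := by omega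
  rw [this]
  omega

theorem invE_B {N m j i : ℕ} (hj1 : 1 ≤ j) (hjm : j ≤ m) (him : m + 1 ≤ i) (hiN : i ≤ N) :
    invE N (insert i ((Finset.Icc 1 m).erase j))
      = (m - 1) * (N - m - 1) + (j - 1) + (N - i) := by
  rw [invE_eq_sum]
  have hcomp : Finset.Icc 1 N \ insert i ((Finset.Icc 1 m).erase j)
      = insert j ((Finset.Icc (m + 1) N).erase i) := by
    ext a
    simp only [Finset.mem_sdiff, Finset.mem_insert, Finset.mem_erase, Finset.mem_Icc]
    omega
  rw [hcomp, Finset.sum_insert (by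
    rw [Finset.mem_erase, Finset.mem_Icc]; push_neg; intro _; omega)]
  have hfib_i : ((insert j ((Finset.Icc (m + 1) N).erase i)).filter (i < ·)).card = N - i := by
    have : (insert j ((Finset.Icc (m + 1) N).erase i)).filter (i < ·) = Finset.Icc (i + 1) N := by
      ext a
      simp only [Finset.mem_filter, Finset.mem_insert, Finset.mem_erase, Finset.mem_Icc]
      omega
    rw [this, Nat.card_Icc]; omega
  have hval : ∀ a ∈ (Finset.Icc 1 m).erase j,
      ((insert j ((Finset.Icc (m + 1) N).erase i)).filter (a < ·)).card
        = (N - m - 1) + if a < j then 1 else 0 := by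
    intro a ha
    rw [Finset.mem_erase, Finset.mem_Icc] at ha
    have hjni : j ∉ (Finset.Icc (m + 1) N).erase i := by
      rw [Finset.mem_erase, Finset.mem_Icc]; push_neg; intro _; omega
    rw [Finset.filter_insert]
    have hrest : (((Finset.Icc (m + 1) N).erase i).filter (a < ·)).card = N - m - 1 := by
      rw [Finset.filter_true_of_mem
        (fun x hx => by
          have := Finset.mem_of_mem_erase hx
          rw [Finset.mem_Icc] at this; omega),
        Finset.card_erase_of_mem (by rw [Finset.mem_Icc]; omega), Nat.card_Icc]
      omega
    split_ifs with h
    · rw [Finset.card_insert_of_notMem (fun hc => hjni (Finset.mem_of_mem_filter _ hc)), hrest]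
    · rw [hrest]; omega
  rw [hfib_i, Finset.sum_congr rfl hval, Finset.sum_add_distrib, Finset.sum_const,
    Finset.card_erase_of_mem (by rw [Finset.mem_Icc]; omega), Nat.card_Icc, smul_eq_mul]
  have hsum_ite : (∑ a ∈ (Finset.Icc 1 m).erase j, if a < j then 1 else 0) = j - 1 := by
    have h1 : (∑ a ∈ (Finset.Icc 1 m).erase j, if a < j then 1 else 0)
        = (((Finset.Icc 1 m).erase j).filter (· < j)).card := by
      simp [Finset.sum_boole]
    have h2 : ((Finset.Icc 1 m).erase j).filter (· < j) = Finset.Icc 1 (j - 1) := by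
      ext a; simp only [Finset.mem_filter, Finset.mem_erase, Finset.mem_Icc]; omega
    rw [h1, h2, Nat.card_Icc]
    omega
  rw [hsum_ite]
  have : m + 1 - 1 - 1 = m - 1 := by omega
  rw [this]
  omega

end Part7

/-! ### Part 8: explicit form of D tau1, sum reindexing -/
section Part8
variable {K : Type} [Field K]

theorem sum_pow_Icc (t : K) (a b : ℕ) :
    ∑ i ∈ Finset.Icc (a + 1) b, t ^ (i - 1) = t ^ a * ∑ r ∈ Finset.range (b - a), t ^ r := by
  have h : Finset.Icc (a + 1) b = Finset.Ico (a + 1) (b + 1) := by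
    ext x; simp only [Finset.mem_Icc, Finset.mem_Ico]; omega
  rw [h, Finset.sum_Ico_eq_sum_range, show b + 1 - (a + 1) = b - a from by omega,
    Finset.mul_sum]
  refine Finset.sum_congr rfl fun r _ => ?_
  rw [show a + 1 + r - 1 = a + r from by omega, pow_add]

theorem sum_inv_pow_Icc (t : K) (ht : t ≠ 0) {N m : ℕ} (hm : m + 1 ≤ N) :
    ∑ i ∈ Finset.Icc (m + 1) N, t⁻¹ ^ (N - i)
      = t⁻¹ ^ (N - m - 1) * ∑ r ∈ Finset.range (N - m), t ^ r := by
  have h : Finset.Icc (m + 1) N = Finset.Ico (m + 1) (N + 1) := by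
    ext x; simp only [Finset.mem_Icc, Finset.mem_Ico]; omega
  rw [h, Finset.sum_Ico_eq_sum_range, show N + 1 - (m + 1) = N - m from by omega,
    Finset.mul_sum]
  refine Finset.sum_congr rfl fun r hr => ?_
  rw [Finset.mem_range] at hr
  rw [show N - (m + 1 + r) = (N - m - 1) - r from by omega,
    pow_sub₀ t⁻¹ (inv_ne_zero ht) (by omega)]
  congr 1
  rw [inv_pow, inv_inv]

theorem gN_split (t : K) {N m : ℕ} (hm : m ≤ N) :
    ∑ r ∈ Finset.range N, t ^ r
      = (∑ r ∈ Finset.range m, t ^ r) + t ^ m * ∑ r ∈ Finset.range (N - m), t ^ r := by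
  conv_lhs => rw [show N = m + (N - m) from by omega]
  rw [Finset.sum_range_add, Finset.mul_sum]
  congr 1
  exact Finset.sum_congr rfl fun r _ => pow_add t m r

theorem D_phi_insA (t : K) {N m i : ℕ} (him : m + 1 ≤ i) (hiN : i ≤ N) :
    opD t N (phi K (insert i (Finset.Icc 1 m)))
      = (t ^ (i - 1) * (-1 : K) ^ m) • phi K (Finset.Icc 1 m)
        + ∑ j ∈ Finset.Icc 1 m,
            (((-1 : K) ^ (j - 1)) * t ^ (j - 1)) • phi K (insert i ((Finset.Icc 1 m).erase j)) := by
  have hsplit : Finset.Icc 1 N = Finset.Icc 1 m ∪ Finset.Icc (m + 1) N := by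
    ext a; simp only [Finset.mem_Icc, Finset.mem_union]; omega
  have hdisj : Disjoint (Finset.Icc 1 m) (Finset.Icc (m + 1) N) := by
    rw [Finset.disjoint_left]
    intro a ha ha'
    rw [Finset.mem_Icc] at ha ha'
    omega
  rw [opD_apply, hsplit, Finset.sum_union hdisj]
  have hA : ∀ j ∈ Finset.Icc 1 m,
      t ^ (j - 1) • fermD K j (phi K (insert i (Finset.Icc 1 m)))
        = (((-1 : K) ^ (j - 1)) * t ^ (j - 1)) • phi K (insert i ((Finset.Icc 1 m).erase j)) := by
    intro j hj
    rw [Finset.mem_Icc] at hj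
    have hji : j ∈ insert i (Finset.Icc 1 m) :=
      Finset.mem_insert_of_mem (Finset.mem_Icc.2 ⟨hj.1, hj.2⟩)
    rw [fermD_phi_mem hji]
    have hcard : ((insert i (Finset.Icc 1 m)).filter (· < j)).card = j - 1 := by
      rw [filter_card_insert j (by rw [Finset.mem_Icc]; omega), if_neg (by omega), add_zero]
      have : (Finset.Icc 1 m).filter (· < j) = Finset.Icc 1 (j - 1) := by
        ext a; simp only [Finset.mem_filter, Finset.mem_Icc]; omega
      rw [this, Nat.card_Icc]
      omega
    rw [hcard, Finset.erase_insert_of_ne (by omega : i ≠ j), smul_smul, mul_comm]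
  have hB : ∑ j ∈ Finset.Icc (m + 1) N, t ^ (j - 1) • fermD K j (phi K (insert i (Finset.Icc 1 m)))
      = (t ^ (i - 1) * (-1 : K) ^ m) • phi K (Finset.Icc 1 m) := by
    rw [Finset.sum_eq_single i ?_ ?_]
    · rw [fermD_phi_mem (Finset.mem_insert_self _ _)]
      have hcard : ((insert i (Finset.Icc 1 m)).filter (· < i)).card = m := by
        have : (insert i (Finset.Icc 1 m)).filter (· < i) = Finset.Icc 1 m := by
          ext a; simp only [Finset.mem_filter, Finset.mem_insert, Finset.mem_Icc]; omega
        rw [this, Nat.card_Icc]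
        omega
      rw [hcard, Finset.erase_insert (by rw [Finset.mem_Icc]; omega), smul_smul]
    · intro j hj hne
      rw [Finset.mem_Icc] at hj
      rw [fermD_phi_notMem (by
        rw [Finset.mem_insert, Finset.mem_Icc]; push_neg
        exact ⟨hne, fun _ => by omega⟩), smul_zero]
    · intro h
      exact absurd (Finset.mem_Icc.2 ⟨him, hiN⟩) h
  rw [Finset.sum_congr rfl hA, hB, add_comm]

theorem v_explicit (t : K) {N m : ℕ} (hm : m + 1 ≤ N) :
    opD t N (opM K N (phi K (Finset.Icc 1 m)))
      = (∑ i ∈ Finset.Icc (m + 1) N, t ^ (i - 1)) • phi K (Finset.Icc 1 m)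
        + ∑ j ∈ Finset.Icc 1 m, ∑ i ∈ Finset.Icc (m + 1) N,
            (((-1 : K) ^ (m + j - 1)) * t ^ (j - 1)) • phi K (insert i ((Finset.Icc 1 m).erase j)) := by
  rw [M_phi_Icc (show m ≤ N by omega), map_sum]
  have step : ∀ i ∈ Finset.Icc (m + 1) N,
      opD t N (((-1 : K) ^ m) • phi K (insert i (Finset.Icc 1 m)))
        = t ^ (i - 1) • phi K (Finset.Icc 1 m)
          + ∑ j ∈ Finset.Icc 1 m,
              (((-1 : K) ^ (m + j - 1)) * t ^ (j - 1)) • phi K (insert i ((Finset.Icc 1 m).erase j)) := by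
    intro i hi
    rw [Finset.mem_Icc] at hi
    rw [map_smul, D_phi_insA t hi.1 hi.2, smul_add, smul_smul, Finset.smul_sum]
    congr 1
    · congr 1
      have hsq : ((-1 : K) ^ m) * ((-1 : K) ^ m) = 1 := neg_one_pow_mul_self m
      linear_combination t ^ (i - 1) * hsq
    · refine Finset.sum_congr rfl fun j hj => ?_
      rw [Finset.mem_Icc] at hj
      rw [smul_smul]
      congr 1
      rw [show m + j - 1 = m + (j - 1) from by omega, pow_add]
      ring
  rw [Finset.sum_congr rfl step, Finset.sum_add_distrib, ← Finset.sum_smul, Finset.sum_comm]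

end Part8

/-! ### Part 9: norms -/
section Part9
variable {K : Type} [Field K]

theorem A_ne_B {m j i : ℕ} (him : m + 1 ≤ i) :
    Finset.Icc 1 m ≠ insert i ((Finset.Icc 1 m).erase j) := by
  intro h
  have hi : i ∈ Finset.Icc 1 m := by rw [h]; exact Finset.mem_insert_self _ _
  rw [Finset.mem_Icc] at hi
  omega

theorem insA_inj {m i i' : ℕ} (him : m + 1 ≤ i) (him' : m + 1 ≤ i')
    (h : insert i (Finset.Icc 1 m) = insert i' (Finset.Icc 1 m)) : i = i' := by
  have hi : i ∈ insert i' (Finset.Icc 1 m) := by rw [← h]; exact Finset.mem_insert_self _ _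
  rcases Finset.mem_insert.1 hi with h1 | h1
  · exact h1
  · rw [Finset.mem_Icc] at h1; omega

theorem B_inj {m j i j' i' : ℕ} (hj : 1 ≤ j) (hjm : j ≤ m) (hi : m + 1 ≤ i)
    (hj' : 1 ≤ j') (hjm' : j' ≤ m) (hi' : m + 1 ≤ i')
    (h : insert i ((Finset.Icc 1 m).erase j) = insert i' ((Finset.Icc 1 m).erase j')) :
    j = j' ∧ i = i' := by
  have hii : i = i' := by
    have hmem : i ∈ insert i' ((Finset.Icc 1 m).erase j') := by
      rw [← h]; exact Finset.mem_insert_self _ _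
    rcases Finset.mem_insert.1 hmem with h1 | h1
    · exact h1
    · have h2 := Finset.mem_of_mem_erase h1
      rw [Finset.mem_Icc] at h2; omega
  refine ⟨?_, hii⟩
  by_contra hne
  have hmem : j' ∈ insert i ((Finset.Icc 1 m).erase j) := by
    rw [Finset.mem_insert, Finset.mem_erase, Finset.mem_Icc]
    exact Or.inr ⟨fun hh => hne hh.symm, hj', hjm'⟩
  rw [h] at hmem
  rcases Finset.mem_insert.1 hmem with h1 | h1
  · omega
  · exact (Finset.notMem_erase _ _) h1

theorem sform_tau1_val (t : K) (ht : t ≠ 0) {N m : ℕ} (hm : m + 1 ≤ N) :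
    sform t N (opM K N (phi K (Finset.Icc 1 m))) (opM K N (phi K (Finset.Icc 1 m)))
      = t⁻¹ ^ (m * (N - m - 1))
          * (t⁻¹ ^ (N - m - 1) * ∑ r ∈ Finset.range (N - m), t ^ r) := by
  rw [M_phi_Icc (show m ≤ N by omega), sform_sum_left]
  have hval : ∀ i0, m + 1 ≤ i0 → i0 ≤ N →
      (∑ i ∈ Finset.Icc (m + 1) N, ((-1 : K) ^ m) • phi K (insert i (Finset.Icc 1 m)))
          (insert i0 (Finset.Icc 1 m)) = (-1 : K) ^ m := by
    intro i0 h1 h2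
    rw [Finset.sum_apply']
    rw [Finset.sum_eq_single i0 ?_ ?_]
    · rw [Finsupp.smul_apply, phi_apply, if_pos rfl, smul_eq_mul, mul_one]
    · intro i hi hne
      rw [Finset.mem_Icc] at hi
      rw [Finsupp.smul_apply, phi_apply, if_neg (fun hh => hne (insA_inj hi.1 h1 hh)),
        smul_eq_mul, mul_zero]
    · intro hcon
      exact absurd (Finset.mem_Icc.2 ⟨h1, h2⟩) hcon
  have hterm : ∀ i ∈ Finset.Icc (m + 1) N,
      sform t N (((-1 : K) ^ m) • phi K (insert i (Finset.Icc 1 m)))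
          (∑ i' ∈ Finset.Icc (m + 1) N, ((-1 : K) ^ m) • phi K (insert i' (Finset.Icc 1 m)))
        = t⁻¹ ^ (m * (N - m - 1)) * t⁻¹ ^ (N - i) := by
    intro i hi
    have hi' := Finset.mem_Icc.1 hi
    rw [sform_smul_left, sform_phi_left, hval i hi'.1 hi'.2, invE_insA hi'.1 hi'.2, pow_add]
    have hsq := neg_one_pow_mul_self (K := K) m
    linear_combination (t⁻¹ ^ (m * (N - m - 1)) * t⁻¹ ^ (N - i)) * hsq
  rw [Finset.sum_congr rfl hterm, ← Finset.mul_sum, sum_inv_pow_Icc t ht hm]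

theorem sform_v_val (t : K) (ht : t ≠ 0) {N m : ℕ} (hm : m + 1 ≤ N) :
    sform t N (opD t N (opM K N (phi K (Finset.Icc 1 m))))
        (opD t N (opM K N (phi K (Finset.Icc 1 m))))
      = t⁻¹ ^ (m * (N - m - 1)) * (∑ r ∈ Finset.range (N - m), t ^ r)
          * (∑ r ∈ Finset.range N, t ^ r) := by
  rw [v_explicit t hm]
  -- coordinate values
  have happly : ∀ S : Finset ℕ,
      ((∑ i ∈ Finset.Icc (m + 1) N, t ^ (i - 1)) • phi K (Finset.Icc 1 m)
        + ∑ j ∈ Finset.Icc 1 m, ∑ i ∈ Finset.Icc (m + 1) N,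
            (((-1 : K) ^ (m + j - 1)) * t ^ (j - 1)) • phi K (insert i ((Finset.Icc 1 m).erase j))) S
      = (∑ i ∈ Finset.Icc (m + 1) N, t ^ (i - 1)) * (if Finset.Icc 1 m = S then 1 else 0)
        + ∑ j ∈ Finset.Icc 1 m, ∑ i ∈ Finset.Icc (m + 1) N,
            (((-1 : K) ^ (m + j - 1)) * t ^ (j - 1))
              * (if insert i ((Finset.Icc 1 m).erase j) = S then 1 else 0) := by
    intro S
    rw [Finsupp.add_apply, Finsupp.smul_apply, phi_apply, smul_eq_mul, Finset.sum_apply']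
    congr 1
    refine Finset.sum_congr rfl fun j _ => ?_
    rw [Finset.sum_apply']
    refine Finset.sum_congr rfl fun i _ => ?_
    rw [Finsupp.smul_apply, phi_apply, smul_eq_mul]
  have hvalA :
      ((∑ i ∈ Finset.Icc (m + 1) N, t ^ (i - 1)) • phi K (Finset.Icc 1 m)
        + ∑ j ∈ Finset.Icc 1 m, ∑ i ∈ Finset.Icc (m + 1) N,
            (((-1 : K) ^ (m + j - 1)) * t ^ (j - 1)) • phi K (insert i ((Finset.Icc 1 m).erase j)))
          (Finset.Icc 1 m)
      = ∑ i ∈ Finset.Icc (m + 1) N, t ^ (i - 1) := by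
    rw [happly, if_pos rfl, mul_one]
    have hz : ∑ j ∈ Finset.Icc 1 m, ∑ i ∈ Finset.Icc (m + 1) N,
        (((-1 : K) ^ (m + j - 1)) * t ^ (j - 1))
          * (if insert i ((Finset.Icc 1 m).erase j) = Finset.Icc 1 m then 1 else 0) = 0 := by
      refine Finset.sum_eq_zero fun j _ => Finset.sum_eq_zero fun i hi => ?_
      rw [Finset.mem_Icc] at hi
      rw [if_neg (fun hh => A_ne_B hi.1 hh.symm), mul_zero]
    rw [hz, add_zero]
  have hvalB : ∀ j0 i0, 1 ≤ j0 → j0 ≤ m → m + 1 ≤ i0 → i0 ≤ N →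
      ((∑ i ∈ Finset.Icc (m + 1) N, t ^ (i - 1)) • phi K (Finset.Icc 1 m)
        + ∑ j ∈ Finset.Icc 1 m, ∑ i ∈ Finset.Icc (m + 1) N,
            (((-1 : K) ^ (m + j - 1)) * t ^ (j - 1)) • phi K (insert i ((Finset.Icc 1 m).erase j)))
          (insert i0 ((Finset.Icc 1 m).erase j0))
      = ((-1 : K) ^ (m + j0 - 1)) * t ^ (j0 - 1) := by
    intro j0 i0 h1 h2 h3 h4
    rw [happly, if_neg (A_ne_B h3), mul_zero, zero_add]
    rw [Finset.sum_eq_single j0 ?_ ?_]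
    · rw [Finset.sum_eq_single i0 ?_ ?_]
      · rw [if_pos rfl, mul_one]
      · intro i hi hne
        rw [Finset.mem_Icc] at hi
        rw [if_neg (fun hh => hne (B_inj h1 h2 hi.1 h1 h2 h3 hh).2), mul_zero]
      · intro hcon
        exact absurd (Finset.mem_Icc.2 ⟨h3, h4⟩) hcon
    · intro j hj hne
      rw [Finset.mem_Icc] at hj
      refine Finset.sum_eq_zero fun i hi => ?_
      rw [Finset.mem_Icc] at hi
      rw [if_neg (fun hh => hne (B_inj hj.1 hj.2 hi.1 h1 h2 h3 hh).1), mul_zero]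
    · intro hcon
      exact absurd (Finset.mem_Icc.2 ⟨h1, h2⟩) hcon
  -- expand the bilinear form
  rw [sform_add_left, sform_smul_left, sform_phi_left, hvalA, sform_sum_left]
  have houter : ∀ j ∈ Finset.Icc 1 m,
      sform t N (∑ i ∈ Finset.Icc (m + 1) N,
          (((-1 : K) ^ (m + j - 1)) * t ^ (j - 1)) • phi K (insert i ((Finset.Icc 1 m).erase j)))
        ((∑ i ∈ Finset.Icc (m + 1) N, t ^ (i - 1)) • phi K (Finset.Icc 1 m)
          + ∑ j' ∈ Finset.Icc 1 m, ∑ i ∈ Finset.Icc (m + 1) N,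
              (((-1 : K) ^ (m + j' - 1)) * t ^ (j' - 1))
                • phi K (insert i ((Finset.Icc 1 m).erase j')))
      = t ^ (N - m - 1)
          * (t⁻¹ ^ (m * (N - m - 1)) * (t ^ (j - 1) * ∑ i ∈ Finset.Icc (m + 1) N, t⁻¹ ^ (N - i))) := by
    intro j hj
    rw [Finset.mem_Icc] at hj
    rw [sform_sum_left, Finset.mul_sum, Finset.mul_sum, Finset.mul_sum]
    refine Finset.sum_congr rfl fun i hi => ?_
    rw [Finset.mem_Icc] at hi
    rw [sform_smul_left, sform_phi_left, hvalB j i hj.1 hj.2 hi.1 hi.2,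
      invE_B hj.1 hj.2 hi.1 hi.2]
    -- scalar identity
    have hm1 : m - 1 + 1 = m := by omega
    have key : m * (N - m - 1) = (m - 1) * (N - m - 1) + (N - m - 1) := by
      conv_lhs => rw [show m = (m - 1) + 1 from by omega]
      rw [Nat.succ_mul, hm1]
    have hXp : m * (N - m - 1) + ((j - 1) + (N - i))
        = ((m - 1) * (N - m - 1) + (j - 1) + (N - i)) + (N - m - 1) := by
      rw [key]; ring
    have hcan : (t⁻¹ : K) ^ (N - m - 1) * t ^ (N - m - 1) = 1 := by
      rw [inv_pow]; exact inv_mul_cancel₀ (pow_ne_zero _ ht)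
    have h2 : (t⁻¹ : K) ^ (m * (N - m - 1)) * t⁻¹ ^ (j - 1) * t⁻¹ ^ (N - i)
        = t⁻¹ ^ (((m - 1) * (N - m - 1) + (j - 1) + (N - i)) + (N - m - 1)) := by
      rw [← pow_add, ← pow_add, add_assoc, hXp]
    rw [pow_add] at h2
    have h1 : (t⁻¹ : K) ^ ((m - 1) * (N - m - 1) + (j - 1) + (N - i))
        = t⁻¹ ^ (m * (N - m - 1)) * t⁻¹ ^ (j - 1) * t⁻¹ ^ (N - i) * t ^ (N - m - 1) := by
      calc (t⁻¹ : K) ^ ((m - 1) * (N - m - 1) + (j - 1) + (N - i))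
          = t⁻¹ ^ ((m - 1) * (N - m - 1) + (j - 1) + (N - i)) * (t⁻¹ ^ (N - m - 1) * t ^ (N - m - 1)) := by
            rw [hcan, mul_one]
        _ = (t⁻¹ ^ ((m - 1) * (N - m - 1) + (j - 1) + (N - i)) * t⁻¹ ^ (N - m - 1)) * t ^ (N - m - 1) := by
            ring
        _ = t⁻¹ ^ (m * (N - m - 1)) * t⁻¹ ^ (j - 1) * t⁻¹ ^ (N - i) * t ^ (N - m - 1) := by
            rw [← h2]
    rw [h1]
    have hsq : ((-1 : K) ^ (m + j - 1)) * ((-1 : K) ^ (m + j - 1)) = 1 := neg_one_pow_mul_self _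
    have hjc : (t : K) ^ (j - 1) * t⁻¹ ^ (j - 1) = 1 := by
      rw [inv_pow]; exact mul_inv_cancel₀ (pow_ne_zero _ ht)
    linear_combination
      (t ^ (j - 1) * t ^ (j - 1) * t⁻¹ ^ (j - 1) * t⁻¹ ^ (m * (N - m - 1)) * t⁻¹ ^ (N - i)
        * t ^ (N - m - 1)) * hsq
      + (t ^ (j - 1) * t⁻¹ ^ (m * (N - m - 1)) * t⁻¹ ^ (N - i) * t ^ (N - m - 1)) * hjc
  rw [Finset.sum_congr rfl houter]
  -- now sum up
  rw [invE_A (show m ≤ N by omega), sum_pow_Icc t m N, sum_inv_pow_Icc t ht hm]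
  have hsumj : ∑ j ∈ Finset.Icc 1 m,
      t ^ (N - m - 1) * (t⁻¹ ^ (m * (N - m - 1))
        * (t ^ (j - 1) * (t⁻¹ ^ (N - m - 1) * ∑ r ∈ Finset.range (N - m), t ^ r)))
      = t ^ (N - m - 1) * (t⁻¹ ^ (m * (N - m - 1))
        * ((∑ r ∈ Finset.range m, t ^ r) * (t⁻¹ ^ (N - m - 1) * ∑ r ∈ Finset.range (N - m), t ^ r))) := by
    have hSm : ∑ j ∈ Finset.Icc 1 m, t ^ (j - 1) = ∑ r ∈ Finset.range m, t ^ r := by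
      have h := sum_pow_Icc t 0 m
      rw [pow_zero, one_mul, Nat.sub_zero] at h
      exact h
    rw [← hSm]
    simp only [Finset.mul_sum, Finset.sum_mul]
    rw [Finset.sum_comm]
  rw [hsumj]
  -- final scalar identity
  have e1 : m * (N - m) = m * (N - m - 1) + m := by
    conv_lhs => rw [show N - m = (N - m - 1) + 1 from by omega]
    rw [Nat.mul_succ]
  rw [e1, pow_add, gN_split t (show m ≤ N by omega)]
  have hcm : (t : K) ^ m * t⁻¹ ^ m = 1 := by
    rw [inv_pow]; exact mul_inv_cancel₀ (pow_ne_zero _ ht)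
  have hcp : (t : K) ^ (N - m - 1) * t⁻¹ ^ (N - m - 1) = 1 := by
    rw [inv_pow]; exact mul_inv_cancel₀ (pow_ne_zero _ ht)
  set S := ∑ r ∈ Finset.range (N - m), t ^ r
  set Sm := ∑ r ∈ Finset.range m, t ^ r
  set U := (t⁻¹ : K) ^ (m * (N - m - 1))
  linear_combination (U * S * S * t ^ m) * hcm + (U * S * Sm) * hcp
end Part9

/-- with F₁ = {1,…,m} and τ_{F₁} = M φ_{F₁}, there is the
ω-eigenvector τ_{F₀} ∈ ker D with content vector [-m,1-m,…,-1,N-m-1,…,1,0]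
and ‖τ_{F₀}‖² = t^{(m+2)(N-m-1)}[N]_t/[N-m]_t such that
D τ_{F₁} = t^{-(m+1)(N-m-1)} [N-m]_t · τ_{F₀}; in particular
‖D τ_{F₁}‖² = t^{N-m-1} [N]_t ‖τ_{F₁}‖². -/
theorem D_tauF1 (K : Type) [Field K] (t : K) (ht : t ≠ 0) (N m : ℕ)
    (hm : m + 1 ≤ N)
    (hgen : ∀ n, 2 ≤ n → n ≤ N → (∑ i ∈ Finset.range n, t ^ i) ≠ 0) :
    ∃ τF0 : SP K,
      opD t N τF0 = 0 ∧
      (∀ i, 1 ≤ i → i ≤ N →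
        omega t N i τF0 =
          (t ^ (if i ≤ m then (i : ℤ) - m - 1 else (N : ℤ) - i)) • τF0) ∧
      sform t N τF0 τF0 =
        t ^ ((m + 2) * (N - m - 1)) * (∑ i ∈ Finset.range N, t ^ i) /
          (∑ i ∈ Finset.range (N - m), t ^ i) ∧
      opD t N (opM K N (phi K (Finset.Icc 1 m))) =
        (t ^ (-(((m : ℤ) + 1) * ((N : ℤ) - m - 1))) *
          (∑ i ∈ Finset.range (N - m), t ^ i)) • τF0 ∧
      sform t N (opD t N (opM K N (phi K (Finset.Icc 1 m))))
          (opD t N (opM K N (phi K (Finset.Icc 1 m)))) =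
        t ^ (N - m - 1) * (∑ i ∈ Finset.range N, t ^ i) *
          sform t N (opM K N (phi K (Finset.Icc 1 m)))
            (opM K N (phi K (Finset.Icc 1 m))) := by
  have hS : (∑ i ∈ Finset.range (N - m), t ^ i) ≠ 0 := by
    rcases Nat.lt_or_ge (N - m) 2 with h | h
    · rw [show N - m = 1 from by omega]
      simp
    · exact hgen _ h (by omega)
  set v := opD t N (opM K N (phi K (Finset.Icc 1 m))) with hv
  refine ⟨(t ^ ((m + 1) * (N - m - 1)) / (∑ i ∈ Finset.range (N - m), t ^ i)) • v,
    ?_, ?_, ?_, ?_, ?_⟩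
  · rw [map_smul, hv, Dsq, smul_zero]
  · intro i h1 h2
    have heig := omega_tau1_eigen t ht hm i h1 h2
    have hcomm := omega_D_comm t h1 h2 (opM K N (phi K (Finset.Icc 1 m)))
    have hv_eig : omega t N i v
        = (if i ≤ m then t⁻¹ ^ (m + 1 - i) else t ^ (N - i)) • v := by
      rw [hv, hcomm, heig, map_smul, ← hv]
    have hE : (t ^ (if i ≤ m then (i : ℤ) - m - 1 else (N : ℤ) - i) : K)
        = (if i ≤ m then t⁻¹ ^ (m + 1 - i) else t ^ (N - i)) := by
      by_cases him : i ≤ m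
      · rw [if_pos him, if_pos him,
          show (i : ℤ) - m - 1 = -((m + 1 - i : ℕ) : ℤ) from by omega,
          zpow_neg, zpow_natCast, ← inv_pow]
      · rw [if_neg him, if_neg him,
          show (N : ℤ) - i = ((N - i : ℕ) : ℤ) from by omega, zpow_natCast]
    rw [map_smul, hv_eig, hE, smul_smul, smul_smul]
    congr 1
    ring
  · rw [sform_smul_left, sform_smul_right, hv, sform_v_val t ht hm]
    rw [inv_pow]
    field_simp
    ring
  · have hcast : (((m + 1) * (N - m - 1) : ℕ) : ℤ) = ((m : ℤ) + 1) * ((N : ℤ) - m - 1) := by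
      rw [Nat.cast_mul]
      have h1 : ((m + 1 : ℕ) : ℤ) = (m : ℤ) + 1 := by push_cast; ring
      have h2 : ((N - m - 1 : ℕ) : ℤ) = (N : ℤ) - m - 1 := by omega
      rw [h1, h2]
    have hone : (t ^ (-(((m : ℤ) + 1) * ((N : ℤ) - m - 1))) *
        (∑ i ∈ Finset.range (N - m), t ^ i))
          * (t ^ ((m + 1) * (N - m - 1)) / (∑ i ∈ Finset.range (N - m), t ^ i)) = 1 := by
      rw [← hcast, zpow_neg, zpow_natCast]
      field_simp
    rw [smul_smul, hone, one_smul]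
  · rw [hv, sform_v_val t ht hm, sform_tau1_val t ht hm]
    simp only [inv_pow]
    field_simp
end
end

section
/- Define X_0^a = 1 and X_n^a = 1 - t^{-1} T_n X_{n-1}^a, and A^{(n)} = X_1^a X_2^a ⋯ X_n^a. Then (T_j + 1) A^{(n)} = 0 for all 1 ≤ j ≤ n, and A^{(n)} A^{(n)} = t^{-n(n+1)/2} [n+1]_t! · A^{(n)}. -/
noncomputable section

variable {K A : Type} [Field K] [Ring A] [Algebra K A]

/-- X_0^a = 1, X_n^a = 1 - t⁻¹ T_n X_{n-1}^a -/
def heckeXa (t : K) (T : ℕ → A) : ℕ → A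
  | 0 => 1
  | k + 1 => 1 - t⁻¹ • (T (k + 1) * heckeXa t T k)

/-- A^{(n)} = X_1^a X_2^a ⋯ X_n^a -/
def heckeA (t : K) (T : ℕ → A) : ℕ → A
  | 0 => 1
  | k + 1 => heckeA t T k * heckeXa t T (k + 1)

lemma key_step (t : K) (ht : t ≠ 0) (U V Z : A)
    (hUZ : ∀ x : A, Z * (U * x) = U * (Z * x)) (hUZ0 : Z * U = U * Z)
    (hbraid : ∀ x : A, V * (U * (V * x)) = U * (V * (U * x)))
    (hquad : ∀ x : A, U * (U * x) = t • (U * x) + t • x - U * x)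
    (hquad0 : U * U = t • U + t • (1:A) - U) :
    (U + 1) * ((1 - t⁻¹ • (V * Z)) * (1 - t⁻¹ • (U * (1 - t⁻¹ • (V * Z))))) =
      (t⁻¹ * t⁻¹) • (V * (U * ((V + 1) * (Z * (1 - t⁻¹ • (V * Z)))))) := by
  simp only [mul_sub, sub_mul, mul_add, add_mul, mul_one, one_mul, smul_mul_assoc,
    mul_smul_comm, smul_smul, smul_sub, smul_add, mul_assoc, hUZ, hUZ0, hbraid,
    hquad, hquad0]
  simp only [inv_mul_cancel₀ ht, mul_one, one_smul]
  abel

lemma quad_sq (t : K) (U : A) (hq : (U - algebraMap K A t) * (U + 1) = 0) :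
    U * U = t • U + t • (1:A) - U := by
  have h : U * U - (t • U + t • (1:A) - U) = (U - algebraMap K A t) * (U + 1) := by
    simp only [Algebra.algebraMap_eq_smul_one, sub_mul, mul_add, add_mul, mul_one, one_mul,
      smul_mul_assoc]
    abel
  have h2 := h.trans hq
  rw [sub_eq_zero] at h2
  exact h2

lemma quad_flip (t : K) (ht : t ≠ 0) (U : A) (hq : (U - algebraMap K A t) * (U + 1) = 0) :
    (U + 1) * (1 - t⁻¹ • U) = 0 := by
  have h : (U + 1) * (1 - t⁻¹ • U) = (-t⁻¹) • ((U - algebraMap K A t) * (U + 1)) := by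
    simp only [Algebra.algebraMap_eq_smul_one, sub_mul, mul_sub, mul_add, add_mul, mul_one,
      one_mul, smul_mul_assoc, mul_smul_comm, smul_smul, smul_sub, smul_add, neg_smul,
      smul_neg, neg_mul, inv_mul_cancel₀ ht, one_smul]
    abel
  rw [h, hq, smul_zero]

lemma commX (t : K) (T : ℕ → A) (m : ℕ) :
    ∀ k, (∀ i, 1 ≤ i → i ≤ k → T i * T m = T m * T i) →
      T m * heckeXa t T k = heckeXa t T k * T m
  | 0, _ => by simp [heckeXa]
  | k+1, h => by
    have ih := commX t T m k (fun i h1 h2 => h i h1 (by omega))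
    have h1 := h (k+1) (by omega) le_rfl
    simp only [heckeXa, mul_sub, sub_mul, mul_one, one_mul, mul_smul_comm, smul_mul_assoc]
    rw [← mul_assoc, ← h1, mul_assoc, ih, ← mul_assoc]

lemma commA (t : K) (T : ℕ → A) (m : ℕ) :
    ∀ k, (∀ i, 1 ≤ i → i ≤ k → T i * T m = T m * T i) →
      T m * heckeA t T k = heckeA t T k * T m
  | 0, _ => by simp [heckeA]
  | k+1, h => by
    have ih := commA t T m k (fun i h1 h2 => h i h1 (by omega))
    have hx := commX t T m (k+1) h
    simp only [heckeA]
    rw [← mul_assoc, ih, mul_assoc, hx, ← mul_assoc]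

lemma keyL (t : K) (ht : t ≠ 0) (n : ℕ) (T : ℕ → A)
    (braid : ∀ i, 1 ≤ i → i < n → T i * T (i + 1) * T i = T (i + 1) * T i * T (i + 1))
    (comm : ∀ i j, 1 ≤ i → j ≤ n → i + 2 ≤ j → T i * T j = T j * T i)
    (quad : ∀ i, 1 ≤ i → i ≤ n → (T i - algebraMap K A t) * (T i + 1) = 0) :
    ∀ m, m + 1 ≤ n → (T (m+1) + 1) * (heckeXa t T m * heckeXa t T (m+1)) = 0
  | 0, h => by
    have := quad_flip t ht (T 1) (quad 1 le_rfl h)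
    simpa [heckeXa] using this
  | m+1, h => by
    have IH := keyL t ht n T braid comm quad m (by omega)
    set U := T (m+2) with hU
    set V := T (m+1) with hV
    set Z := heckeXa t T m with hZ
    have hUZ0 : Z * U = U * Z := by
      exact (commX t T (m+2) m (fun i h1 h2 => comm i (m+2) h1 (by omega) (by omega))).symm
    have hUZ : ∀ x : A, Z * (U * x) = U * (Z * x) := fun x => by
      rw [← mul_assoc, hUZ0, mul_assoc]
    have hb0 : V * U * V = U * V * U := braid (m+1) (by omega) (by omega)
    have hbraid : ∀ x : A, V * (U * (V * x)) = U * (V * (U * x)) := fun x => by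
      simp only [← mul_assoc, hb0]
    have hq0 : U * U = t • U + t • (1:A) - U := quad_sq t U (quad (m+2) (by omega) h)
    have hquad : ∀ x : A, U * (U * x) = t • (U * x) + t • x - U * x := fun x => by
      rw [← mul_assoc, hq0, sub_mul, add_mul, smul_mul_assoc, smul_mul_assoc, one_mul]
    have e1 : heckeXa t T (m+1) = 1 - t⁻¹ • (V * Z) := rfl
    have e2 : heckeXa t T (m+2) = 1 - t⁻¹ • (U * (1 - t⁻¹ • (V * Z))) := by
      rw [heckeXa, e1]
    rw [e1] at IH
    show (U + 1) * ((1 - t⁻¹ • (V * Z)) * (1 - t⁻¹ • (U * (1 - t⁻¹ • (V * Z))))) = 0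
    rw [key_step t ht U V Z hUZ hUZ0 hbraid hquad hq0, IH, mul_zero, mul_zero, smul_zero]

lemma partA (t : K) (ht : t ≠ 0) (n : ℕ) (T : ℕ → A)
    (braid : ∀ i, 1 ≤ i → i < n → T i * T (i + 1) * T i = T (i + 1) * T i * T (i + 1))
    (comm : ∀ i j, 1 ≤ i → j ≤ n → i + 2 ≤ j → T i * T j = T j * T i)
    (quad : ∀ i, 1 ≤ i → i ≤ n → (T i - algebraMap K A t) * (T i + 1) = 0) :
    ∀ j, 1 ≤ j → j ≤ n → (T j + 1) * heckeA t T n = 0 := by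
  induction n with
  | zero => intro j h1 h2; omega
  | succ n IHn =>
    intro j h1 h2
    rcases lt_or_eq_of_le h2 with hlt | heq
    · -- j ≤ n
      have IH := IHn (fun i a b => braid i a (by omega)) (fun i k a b c => comm i k a (by omega) c)
        (fun i a b => quad i a (by omega)) j h1 (by omega)
      rw [heckeA, ← mul_assoc, IH, zero_mul]
    · -- j = n+1
      subst heq
      match n with
      | 0 =>
        have := keyL t ht 1 T braid comm quad 0 le_rfl
        simpa [heckeA, heckeXa] using this
      | m+1 =>
        have hk := keyL t ht (m+2) T braid comm quad (m+1) le_rfl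
        have hc : T (m+2) * heckeA t T m = heckeA t T m * T (m+2) :=
          commA t T (m+2) m (fun i a b => comm i (m+2) a le_rfl (by omega))
        have hc' : (T (m+2) + 1) * heckeA t T m = heckeA t T m * (T (m+2) + 1) := by
          rw [add_mul, mul_add, one_mul, mul_one, hc]
        rw [heckeA, heckeA, mul_assoc, ← mul_assoc, hc', mul_assoc, hk, mul_zero]

lemma TA (t : K) (ht : t ≠ 0) (n : ℕ) (T : ℕ → A)
    (braid : ∀ i, 1 ≤ i → i < n → T i * T (i + 1) * T i = T (i + 1) * T i * T (i + 1))
    (comm : ∀ i j, 1 ≤ i → j ≤ n → i + 2 ≤ j → T i * T j = T j * T i)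
    (quad : ∀ i, 1 ≤ i → i ≤ n → (T i - algebraMap K A t) * (T i + 1) = 0) :
    ∀ j, 1 ≤ j → j ≤ n → T j * heckeA t T n = - heckeA t T n := by
  intro j h1 h2
  have := partA t ht n T braid comm quad j h1 h2
  rw [add_mul, one_mul] at this
  exact eq_neg_of_add_eq_zero_left this

lemma XA (t : K) (ht : t ≠ 0) (n : ℕ) (T : ℕ → A)
    (braid : ∀ i, 1 ≤ i → i < n → T i * T (i + 1) * T i = T (i + 1) * T i * T (i + 1))
    (comm : ∀ i j, 1 ≤ i → j ≤ n → i + 2 ≤ j → T i * T j = T j * T i)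
    (quad : ∀ i, 1 ≤ i → i ≤ n → (T i - algebraMap K A t) * (T i + 1) = 0) :
    ∀ k, k ≤ n → heckeXa t T k * heckeA t T n =
      (∑ j ∈ Finset.range (k+1), (t⁻¹)^j) • heckeA t T n := by
  intro k
  induction k with
  | zero => intro _; simp [heckeXa]
  | succ k IH =>
    intro hk
    have hT := TA t ht n T braid comm quad (k+1) (by omega) hk
    have IH' := IH (by omega)
    rw [heckeXa, sub_mul, one_mul, smul_mul_assoc, mul_assoc, IH', mul_smul_comm, hT,
      smul_neg, smul_neg, sub_neg_eq_add, smul_smul]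
    conv_rhs => rw [geom_sum_succ]
    rw [add_smul, one_smul, add_comm]

lemma sum_inv_geom (t : K) (ht : t ≠ 0) (m : ℕ) :
    ∑ j ∈ Finset.range (m+1), (t⁻¹)^j = (t ^ (-(m:ℤ))) * ∑ i ∈ Finset.range (m+1), t ^ i := by
  rw [Finset.mul_sum, ← Finset.sum_range_reflect (fun j => (t⁻¹)^j) (m+1)]
  refine Finset.sum_congr rfl (fun i hi => ?_)
  rw [Finset.mem_range] at hi
  rw [inv_pow, ← zpow_natCast t (m + 1 - 1 - i), ← zpow_neg, ← zpow_natCast t i,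
    ← zpow_add₀ ht]
  congr 1
  omega

lemma Asq (t : K) (ht : t ≠ 0) (n : ℕ) (T : ℕ → A)
    (braid : ∀ i, 1 ≤ i → i < n → T i * T (i + 1) * T i = T (i + 1) * T i * T (i + 1))
    (comm : ∀ i j, 1 ≤ i → j ≤ n → i + 2 ≤ j → T i * T j = T j * T i)
    (quad : ∀ i, 1 ≤ i → i ≤ n → (T i - algebraMap K A t) * (T i + 1) = 0) :
    heckeA t T n * heckeA t T n =
      (t ^ (-((n * (n + 1) / 2 : ℕ) : ℤ)) *
        ∏ k ∈ Finset.Icc 1 (n + 1), ∑ i ∈ Finset.range k, t ^ i) • heckeA t T n := by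
  induction n with
  | zero => simp [heckeA]
  | succ n IHn =>
    have IH := IHn (fun i a b => braid i a (by omega)) (fun i k a b c => comm i k a (by omega) c)
      (fun i a b => quad i a (by omega))
    have hX := XA t ht (n+1) T braid comm quad (n+1) le_rfl
    calc heckeA t T (n+1) * heckeA t T (n+1)
        = heckeA t T n * (heckeXa t T (n+1) * heckeA t T (n+1)) := by
          rw [heckeA, mul_assoc]
      _ = (∑ j ∈ Finset.range (n+2), (t⁻¹)^j) • (heckeA t T n * heckeA t T n
            * heckeXa t T (n+1)) := by
          rw [hX, mul_smul_comm, heckeA, mul_assoc]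
      _ = ((∑ j ∈ Finset.range (n+2), (t⁻¹)^j) * (t ^ (-((n * (n + 1) / 2 : ℕ) : ℤ)) *
            ∏ k ∈ Finset.Icc 1 (n + 1), ∑ i ∈ Finset.range k, t ^ i)) • heckeA t T (n+1) := by
          rw [IH, smul_mul_assoc, smul_smul, heckeA]
      _ = _ := by
          congr 1
          have he : ((n+1) * (n + 1 + 1) / 2 : ℕ) = (n * (n + 1) / 2 : ℕ) + (n+1) := by
            obtain ⟨c, hc⟩ := Nat.even_mul_succ_self n
            have e : (n+1) * (n+1+1) = n*(n+1) + 2*(n+1) := by ring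
            omega
          have hz : (t : K) ^ (-(((n*(n+1)/2 + (n+1) : ℕ)) : ℤ)) =
              t ^ (-((n*(n+1)/2 : ℕ) : ℤ)) * t ^ (-(((n+1 : ℕ)) : ℤ)) := by
            rw [← zpow_add₀ ht]
            congr 1
            push_cast
            ring
          rw [sum_inv_geom t ht (n+1), Finset.prod_Icc_succ_top (by omega : 1 ≤ n+2), he, hz]
          push_cast
          ring

/-- the antisymmetrizer satisfies (T_j + 1) A^{(n)} = 0 for
1 ≤ j ≤ n, and A^{(n)} A^{(n)} = t^{-n(n+1)/2} [n+1]_t! A^{(n)}. -/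
theorem heckeA_antisymmetric (K A : Type) [Field K] [Ring A] [Algebra K A]
    (t : K) (ht : t ≠ 0) (n : ℕ) (T : ℕ → A)
    (braid : ∀ i, 1 ≤ i → i < n → T i * T (i + 1) * T i = T (i + 1) * T i * T (i + 1))
    (comm : ∀ i j, 1 ≤ i → j ≤ n → i + 2 ≤ j → T i * T j = T j * T i)
    (quad : ∀ i, 1 ≤ i → i ≤ n → (T i - algebraMap K A t) * (T i + 1) = 0) :
    (∀ j, 1 ≤ j → j ≤ n → (T j + 1) * heckeA t T n = 0) ∧
    heckeA t T n * heckeA t T n =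
      (t ^ (-((n * (n + 1) / 2 : ℕ) : ℤ)) *
        ∏ k ∈ Finset.Icc 1 (n + 1), ∑ i ∈ Finset.range k, t ^ i) • heckeA t T n :=
  ⟨partA t ht n T braid comm quad, Asq t ht n T braid comm quad⟩
end
end

section
/- Suppose p(x; θ) is a superpolynomial satisfying the symmetric-Hecke condition T_i^bold p = t·p where T_i^bold p(x;θ) = (1-t) x_{i+1} (p(x;θ) - p(x s_i;θ))/(x_i - x_{i+1}) + T_i p(x s_i;θ). Then the substitution x_i = t·x_{i+1} yields T_i p(x^{(i)};θ) = t·p(x^{(i)};θ), i.e., the specialized polynomial is a t-eigenvector of the purely fermionic Hecke operator T_i. Dually, if T_i^bold p = -p then setting x_{i+1} = t·x_i gives T_i p(x^{(i)};θ) = -p(x^{(i)};θ). -/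
open Finset

noncomputable section

/-- Superpolynomials: polynomials in commuting variables x_1, x_2, … with
coefficients in the span of the fermionic monomials φ_E. -/
abbrev SPoly (K : Type) [Field K] := Finset ℕ →₀ MvPolynomial ℕ K

variable {K : Type} [Field K]

/-- basis monomial φ_E -/
def phiP (K : Type) [Field K] (E : Finset ℕ) : SPoly K := Finsupp.single E 1

/-- operator determined by its values on the basis {φ_E} -/
def opOfP (v : Finset ℕ → SPoly K) : SPoly K →ₗ[MvPolynomial ℕ K] SPoly K :=
  Finsupp.lsum (MvPolynomial ℕ K) fun E =>
    LinearMap.toSpanSingleton (MvPolynomial ℕ K) (SPoly K) (v E)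

/-- the image s_i E of E under the transposition swapping i, i+1 -/
def swapSetP (i : ℕ) (E : Finset ℕ) : Finset ℕ := E.image (Equiv.swap i (i + 1))

/-- the purely fermionic Hecke operator T_i -/
def heckeTP (t : MvPolynomial ℕ K) (i : ℕ) : SPoly K →ₗ[MvPolynomial ℕ K] SPoly K :=
  opOfP fun E =>
    if i ∈ E then
      (if i + 1 ∈ E then -phiP K E else phiP K (swapSetP i E))
    else
      (if i + 1 ∈ E then (t - 1) • phiP K E + t • phiP K (swapSetP i E)
       else t • phiP K E)

/-- the swap x_i ↔ x_{i+1} of the commuting (bosonic) variables -/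
def xswap (i : ℕ) (p : SPoly K) : SPoly K :=
  Finsupp.mapRange (⇑(MvPolynomial.rename (Equiv.swap i (i + 1))))
    (map_zero _) p

/-- substitution x_i := q in the commuting variables -/
def xsubst (i : ℕ) (q : MvPolynomial ℕ K) (p : SPoly K) : SPoly K :=
  Finsupp.mapRange
    (⇑(MvPolynomial.aeval (R := K)
        (fun j => if j = i then q else MvPolynomial.X j)))
    (map_zero _) p


/-- constant polynomial -/
def Ct (t : K) : MvPolynomial ℕ K := MvPolynomial.C t

/-- variable x_j -/
def Xv (K : Type) [Field K] (j : ℕ) : MvPolynomial ℕ K := MvPolynomial.X j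

/-!
Let φ be the specialization (x_i ↦ t x_{i+1}, resp. x_{i+1} ↦ t x_i) and apply ψ = φ ∘ s_i to the
relation. Substitutions act on the bosonic coefficients only, so they commute with T_i; ψ sends
p(x s_i) to φ p and gives the two multiples of p the same coefficient, so these cancel and what
remains is (1 - t) x_{i+1} · T_i(φ p) = (1 - t) x_{i+1} · t φ p
(resp. (t - 1) x_i · T_i(φ p) = (1 - t) x_i · φ p). For t ≠ 1 the nonzero factor cancels.
For t = 1 the relation collapses to T_i p(x s_i) = ±p, and φ is s_i-invariant.
-/

open MvPolynomial

namespace SPoly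

def map (φ : MvPolynomial ℕ K →ₐ[K] MvPolynomial ℕ K) : SPoly K →+ SPoly K :=
  Finsupp.mapRange.addMonoidHom φ.toAddMonoidHom

variable (φ ψ : MvPolynomial ℕ K →ₐ[K] MvPolynomial ℕ K)

@[simp]
lemma map_single (E : Finset ℕ) (a : MvPolynomial ℕ K) :
    map φ (Finsupp.single E a) = Finsupp.single E (φ a) := by
  simp [map]

@[simp]
lemma map_phiP (E : Finset ℕ) : map φ (phiP K E) = phiP K E := by
  simp [phiP]

lemma map_smul (a : MvPolynomial ℕ K) (p : SPoly K) : map φ (a • p) = φ a • map φ p := by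
  ext E
  simp [map]

lemma map_map (p : SPoly K) : map φ (map ψ p) = map (φ.comp ψ) p := by
  ext E
  simp [map]

lemma xswap_eq_map (i : ℕ) (p : SPoly K) : xswap i p = map (rename (Equiv.swap i (i + 1))) p :=
  rfl

lemma xsubst_eq_map (i : ℕ) (q : MvPolynomial ℕ K) (p : SPoly K) :
    xsubst i q p = map (aeval fun j => if j = i then q else X j) p :=
  rfl

lemma map_heckeTP {c : MvPolynomial ℕ K} (hc : φ c = c) (i : ℕ) (p : SPoly K) :
    map φ (heckeTP c i p) = heckeTP c i (map φ p) := by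
  suffices (map φ).comp (heckeTP c i).toAddMonoidHom =
      (heckeTP c i).toAddMonoidHom.comp (map φ) from DFunLike.congr_fun this p
  refine Finsupp.addHom_ext fun E a => ?_
  simp only [AddMonoidHom.comp_apply, LinearMap.toAddMonoidHom_coe, map_single, heckeTP,
    opOfP, Finsupp.lsum_single, LinearMap.toSpanSingleton_apply, map_smul]
  congr 1
  split_ifs <;> simp [map_smul, hc]

lemma map_comp_rename_swap_xswap (i : ℕ) (p : SPoly K) :
    map (φ.comp (rename (Equiv.swap i (i + 1)))) (xswap i p) = map φ p := by
  have hσ : (φ.comp (rename (Equiv.swap i (i + 1)))).comp (rename (Equiv.swap i (i + 1))) = φ :=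
    algHom_ext fun j => by simp
  rw [xswap_eq_map, map_map, hσ]

lemma smul_heckeTP_map_of_relation {c a a' d : MvPolynomial ℕ K} (hc : φ c = c) (i : ℕ)
    {p q : SPoly K} (h : a • (p - q) + d • heckeTP c i q = a' • p) (ha : φ a = φ a') :
    φ d • heckeTP c i (map φ q) = φ a • map φ q := by
  have h' := congrArg (map φ) h
  simp only [_root_.map_add, _root_.map_sub, map_smul, map_heckeTP φ hc, ← ha, smul_sub] at h'
  rw [← sub_eq_zero] at h' ⊢
  rw [← h']
  abel

lemma heckeTP_map_eq_smul_of_heckeTP_xswap {c ε : MvPolynomial ℕ K} (hc : φ c = c)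
    (hε : φ ε = ε) {i : ℕ} (hφ : φ.comp (rename (Equiv.swap i (i + 1))) = φ) {p : SPoly K}
    (h : heckeTP c i (xswap i p) = ε • p) :
    heckeTP c i (map φ p) = ε • map φ p := by
  rw [← hε, ← map_smul, ← h, map_heckeTP φ hc, xswap_eq_map, map_map, hφ]

end SPoly

open SPoly

lemma aeval_comp_rename_swap {f : ℕ → MvPolynomial ℕ K} {i : ℕ} (hf : f i = f (i + 1)) :
    (aeval (R := K) f).comp (rename (Equiv.swap i (i + 1))) = aeval f :=
  algHom_ext fun j => by
    rcases eq_or_ne j i with rfl | hi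
    · simp [hf]
    rcases eq_or_ne j (i + 1) with rfl | hi'
    · simp [hf]
    · simp [Equiv.swap_apply_of_ne_of_ne hi hi']

lemma algHom_Ct (φ : MvPolynomial ℕ K →ₐ[K] MvPolynomial ℕ K) (t : K) : φ (Ct t) = Ct t :=
  algHom_C φ t

lemma Xv_sub_Xv_succ_ne_zero (i : ℕ) : Xv K i - Xv K (i + 1) ≠ 0 :=
  sub_ne_zero.2 fun h => (Nat.succ_ne_self i).symm (X_injective h)

lemma one_sub_Ct_mul_Xv_ne_zero {t : K} (ht : t ≠ 1) (j : ℕ) : (1 - Ct t) * Xv K j ≠ 0 :=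
  mul_ne_zero (sub_ne_zero.2 fun h => ht (C_injective ℕ K (h.symm.trans C_1.symm))) (X_ne_zero j)

theorem heckeTP_xsubst_eq_Ct_smul (t : K) (i : ℕ) (p : SPoly K)
    (h : ((1 - Ct t) * Xv K (i + 1)) • (p - xswap i p) +
        (Xv K i - Xv K (i + 1)) • heckeTP (Ct t) i (xswap i p) =
      (Ct t * (Xv K i - Xv K (i + 1))) • p) :
    heckeTP (Ct t) i (xsubst i (Ct t * Xv K (i + 1)) p) =
      Ct t • xsubst i (Ct t * Xv K (i + 1)) p := by
  rw [xsubst_eq_map]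
  set φ : MvPolynomial ℕ K →ₐ[K] MvPolynomial ℕ K :=
    aeval fun j => if j = i then Ct t * Xv K (i + 1) else X j
  rcases eq_or_ne t 1 with rfl | ht
  · have hC : Ct (1 : K) = 1 := C_1
    simp only [hC, sub_self, zero_mul, zero_smul, zero_add, one_mul] at h
    refine heckeTP_map_eq_smul_of_heckeTP_xswap _ (algHom_Ct _ 1) (algHom_Ct _ 1) ?_ ?_
    · exact aeval_comp_rename_swap (by simp [hC, Xv])
    · rw [hC, one_smul]
      exact smul_right_injective _ (Xv_sub_Xv_succ_ne_zero i) h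
  · have hd : φ (rename (Equiv.swap i (i + 1)) (Xv K i - Xv K (i + 1))) =
        (1 - Ct t) * Xv K (i + 1) := by
      simp [φ, Xv, Ct]; ring
    have ha : φ (rename (Equiv.swap i (i + 1)) ((1 - Ct t) * Xv K (i + 1))) =
        (1 - Ct t) * Xv K (i + 1) * Ct t := by
      simp [φ, Xv, Ct]; ring
    have ha' : φ (rename (Equiv.swap i (i + 1)) (Ct t * (Xv K i - Xv K (i + 1)))) =
        (1 - Ct t) * Xv K (i + 1) * Ct t := by
      simp [φ, Xv, Ct]; ring
    have key := smul_heckeTP_map_of_relation (φ.comp (rename (Equiv.swap i (i + 1))))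
      (algHom_Ct _ t) i h (by simp only [AlgHom.comp_apply, ha, ha'])
    rw [map_comp_rename_swap_xswap, AlgHom.comp_apply, AlgHom.comp_apply, hd, ha,
      mul_smul ((1 - Ct t) * Xv K (i + 1))] at key
    exact smul_right_injective _ (one_sub_Ct_mul_Xv_ne_zero ht _) key

theorem heckeTP_xsubst_succ_eq_neg (t : K) (i : ℕ) (p : SPoly K)
    (h : ((1 - Ct t) * Xv K (i + 1)) • (p - xswap i p) +
        (Xv K i - Xv K (i + 1)) • heckeTP (Ct t) i (xswap i p) =
      (-(Xv K i - Xv K (i + 1))) • p) :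
    heckeTP (Ct t) i (xsubst (i + 1) (Ct t * Xv K i) p) =
      -xsubst (i + 1) (Ct t * Xv K i) p := by
  rw [xsubst_eq_map]
  set φ : MvPolynomial ℕ K →ₐ[K] MvPolynomial ℕ K :=
    aeval fun j => if j = i + 1 then Ct t * Xv K i else X j
  rcases eq_or_ne t 1 with rfl | ht
  · have hC : Ct (1 : K) = 1 := C_1
    simp only [hC, sub_self, zero_mul, zero_smul, zero_add] at h
    rw [← neg_one_smul (MvPolynomial ℕ K) (map φ p)]
    refine heckeTP_map_eq_smul_of_heckeTP_xswap _ (algHom_Ct _ 1) (by simp) ?_ ?_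
    · exact aeval_comp_rename_swap (by simp [hC, Xv])
    · rw [hC, neg_one_smul]
      rw [neg_smul, ← smul_neg] at h
      exact smul_right_injective _ (Xv_sub_Xv_succ_ne_zero i) h
  · have hd : φ (rename (Equiv.swap i (i + 1)) (Xv K i - Xv K (i + 1))) =
        -((1 - Ct t) * Xv K i) := by
      simp [φ, Xv, Ct]; ring
    have ha : φ (rename (Equiv.swap i (i + 1)) ((1 - Ct t) * Xv K (i + 1))) =
        (1 - Ct t) * Xv K i := by
      simp [φ, Xv, Ct]
    have ha' : φ (rename (Equiv.swap i (i + 1)) (-(Xv K i - Xv K (i + 1)))) =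
        (1 - Ct t) * Xv K i := by
      simp [φ, Xv, Ct]; ring
    have key := smul_heckeTP_map_of_relation (φ.comp (rename (Equiv.swap i (i + 1))))
      (algHom_Ct _ t) i h (by simp only [AlgHom.comp_apply, ha, ha'])
    rw [map_comp_rename_swap_xswap, AlgHom.comp_apply, AlgHom.comp_apply, hd, ha, neg_smul,
      neg_eq_iff_eq_neg, ← smul_neg] at key
    exact smul_right_injective _ (one_sub_Ct_mul_Xv_ne_zero ht _) key

/-- The hypothesis 𝐓_i p = t·p (resp. 𝐓_i p = -p) is stated multiplied through by
x_i - x_{i+1}. -/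
theorem symmetric_specialization_general (K : Type) [Field K] (t : K) (i : ℕ) (p : SPoly K) :
    ((((1 - Ct t) * Xv K (i + 1)) • (p - xswap i p) +
        (Xv K i - Xv K (i + 1)) •
          heckeTP (Ct t) i (xswap i p) =
      (Ct t * (Xv K i - Xv K (i + 1))) • p) →
      heckeTP (Ct t) i
          (xsubst i (Ct t * Xv K (i + 1)) p) =
        Ct t • xsubst i (Ct t * Xv K (i + 1)) p) ∧
    ((((1 - Ct t) * Xv K (i + 1)) • (p - xswap i p) +
        (Xv K i - Xv K (i + 1)) •
          heckeTP (Ct t) i (xswap i p) =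
      (-(Xv K i - Xv K (i + 1))) • p) →
      heckeTP (Ct t) i
          (xsubst (i + 1) (Ct t * Xv K i) p) =
        -xsubst (i + 1) (Ct t * Xv K i) p) :=
  ⟨heckeTP_xsubst_eq_Ct_smul t i p, heckeTP_xsubst_succ_eq_neg t i p⟩

/-- if 𝐓_i p = t·p (the Demazure–Lusztig condition, written here
multiplied through by x_i - x_{i+1}), then the substitution x_i := t x_{i+1}
yields T_i p(x^{(i)};θ) = t·p(x^{(i)};θ); dually, if 𝐓_i p = -p, then the
substitution x_{i+1} := t x_i yields T_i p(x^{(i)};θ) = -p(x^{(i)};θ). -/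
theorem symmetric_specialization (K : Type) [Field K] (t : K) (N i : ℕ)
    (h1 : 1 ≤ i) (h2 : i < N) (p : SPoly K) :
    ((((1 - Ct t) * Xv K (i + 1)) • (p - xswap i p) +
        (Xv K i - Xv K (i + 1)) •
          heckeTP (Ct t) i (xswap i p) =
      (Ct t * (Xv K i - Xv K (i + 1))) • p) →
      heckeTP (Ct t) i
          (xsubst i (Ct t * Xv K (i + 1)) p) =
        Ct t • xsubst i (Ct t * Xv K (i + 1)) p) ∧
    ((((1 - Ct t) * Xv K (i + 1)) • (p - xswap i p) +
        (Xv K i - Xv K (i + 1)) •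
          heckeTP (Ct t) i (xswap i p) =
      (-(Xv K i - Xv K (i + 1))) • p) →
      heckeTP (Ct t) i
          (xsubst (i + 1) (Ct t * Xv K i) p) =
        -xsubst (i + 1) (Ct t * Xv K i) p) :=
  symmetric_specialization_general K t i p
end
end
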